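/- arXiv:2402.05905 — 5 statements merged into one kernel-verified Lean document; each statement's English description precedes it below -/
import Mathlib

section
/- Let L : ℂⁿ → ℂᵏ be a surjective (real-linear over the identification ℂⁿ ≅ ℝ^{2n}, in fact complex-linear) map and a ∈ ℂᵏ. If z ∈ 𝒮 ∩ L⁻¹(a) is a local extreme point of the upper half-plane stable slice 𝒮 ∩ L⁻¹(a), then the associated monic polynomial f_z(T) = Tⁿ - z₁T^{n-1} + z₂T^{n-2} - ⋯ + (-1)ⁿzₙ has at most k roots (counted with multiplicity) in ℍ₊ \ ℝ and at most 2k distinct real roots. -/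
open Polynomial

/-- The monic polynomial `f_z(T) = Tⁿ - z₁T^{n-1} + z₂T^{n-2} - ⋯ + (-1)ⁿ zₙ`
associated to `z ∈ ℂⁿ`. -/
noncomputable def fz {n : ℕ} (z : Fin n → ℂ) : ℂ[X] :=
  X ^ n + ∑ i : Fin n, C ((-1 : ℂ) ^ ((i : ℕ) + 1) * z i) * X ^ (n - ((i : ℕ) + 1))

/-- The set of `z ∈ ℂⁿ` such that all roots of `f_z` lie in the closed upper half-plane. -/
def upperStable (n : ℕ) : Set (Fin n → ℂ) :=
  {z | ∀ w ∈ (fz z).roots, 0 ≤ w.im}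

/-- `z` is a local extreme point of `A` if there is a neighborhood `U` of `z` such that
`z` is an extreme point of `conv(A ∩ U)` (convexity over `ℝ`). -/
def IsLocalExtremePoint {E : Type*} [AddCommGroup E] [Module ℝ E] [TopologicalSpace E]
    (A : Set E) (z : E) : Prop :=
  ∃ U ∈ nhds z, z ∈ Set.extremePoints ℝ (convexHull ℝ (A ∩ U))




noncomputable def linC (n : ℕ) : (Fin n → ℂ) →ₗ[ℂ] ℂ[X] where
  toFun w := ∑ i : Fin n, C ((-1 : ℂ) ^ ((i : ℕ) + 1) * w i) * X ^ (n - ((i : ℕ) + 1))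
  map_add' w w' := by
    simp [Pi.add_apply, mul_add, map_add, add_mul, Finset.sum_add_distrib]
  map_smul' c w := by
    simp [Finset.smul_sum, Polynomial.smul_eq_C_mul, mul_assoc, mul_left_comm]

lemma fz_add {n : ℕ} (z w : Fin n → ℂ) : fz (z + w) = fz z + linC n w := by
  simp only [fz, linC, LinearMap.coe_mk, AddHom.coe_mk, Pi.add_apply, mul_add, map_add, add_mul,
    Finset.sum_add_distrib]
  ring

noncomputable def coeffRev (n : ℕ) : ℂ[X] →ₗ[ℂ] (Fin n → ℂ) where
  toFun v i := (-1 : ℂ) ^ ((i : ℕ) + 1) * v.coeff (n - ((i : ℕ) + 1))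
  map_add' v v' := by funext i; simp [mul_add]
  map_smul' c v := by funext i; simp [Polynomial.coeff_smul, smul_eq_mul]; ring

lemma linC_coeffRev {n : ℕ} (v : ℂ[X]) (hv : v.natDegree < n) :
    linC n (coeffRev n v) = v := by
  have h1 : ∀ i : Fin n,
      C ((-1 : ℂ) ^ ((i : ℕ) + 1) * ((-1 : ℂ) ^ ((i : ℕ) + 1) * v.coeff (n - ((i : ℕ) + 1)))) *
        X ^ (n - ((i : ℕ) + 1)) = monomial (n - ((i : ℕ) + 1)) (v.coeff (n - ((i : ℕ) + 1))) := by
    intro i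
    rw [← mul_assoc, ← pow_add, Even.neg_one_pow ⟨(i : ℕ) + 1, by ring⟩, one_mul,
      C_mul_X_pow_eq_monomial]
  show (∑ i : Fin n, C ((-1 : ℂ) ^ ((i : ℕ) + 1) *
      ((-1 : ℂ) ^ ((i : ℕ) + 1) * v.coeff (n - ((i : ℕ) + 1)))) * X ^ (n - ((i : ℕ) + 1))) = v
  rw [Finset.sum_congr rfl fun i _ => h1 i]
  have h2 : ∀ i : Fin n, n - ((i : ℕ) + 1) = ((i.rev : Fin n) : ℕ) := by
    intro i; rw [Fin.val_rev]
  calc (∑ i : Fin n, monomial (n - ((i : ℕ) + 1)) (v.coeff (n - ((i : ℕ) + 1))))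
      = ∑ i : Fin n, monomial ((i.rev : ℕ)) (v.coeff (i.rev : ℕ)) := by
        refine Finset.sum_congr rfl fun i _ => by rw [h2]
    _ = ∑ i : Fin n, monomial (i : ℕ) (v.coeff (i : ℕ)) :=
        Fintype.sum_bijective Fin.rev Fin.rev_involutive.bijective _ _ (fun i => rfl)
    _ = ∑ i ∈ Finset.range n, monomial i (v.coeff i) :=
        Fin.sum_univ_eq_sum_range (fun i => monomial i (v.coeff i)) n
    _ = v := (v.as_sum_range' n hv).symm

noncomputable def polyOf {R : Type*} [CommRing R] (m : ℕ) : (Fin m → R) →ₗ[R] R[X] where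
  toFun c := ∑ i : Fin m, C (c i) * X ^ (i : ℕ)
  map_add' c c' := by simp [map_add, add_mul, Finset.sum_add_distrib]
  map_smul' t c := by simp [Finset.smul_sum, Polynomial.smul_eq_C_mul, mul_assoc]

lemma polyOf_coeff {R : Type*} [CommRing R] {m : ℕ} (c : Fin m → R) (j : Fin m) :
    (polyOf m c).coeff (j : ℕ) = c j := by
  show (∑ i : Fin m, C (c i) * X ^ (i : ℕ)).coeff (j : ℕ) = c j
  rw [finset_sum_coeff]
  rw [Finset.sum_eq_single j]
  · simp
  · intro i _ hij
    rw [coeff_C_mul, coeff_X_pow, if_neg (by simpa [Fin.val_eq_val, eq_comm] using hij), mul_zero]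
  · simp

lemma polyOf_ne_zero {R : Type*} [CommRing R] {m : ℕ} {c : Fin m → R} (hc : c ≠ 0) :
    polyOf m c ≠ 0 := by
  intro h
  apply hc
  funext j
  have := polyOf_coeff c j
  rw [h] at this
  simpa using this.symm

lemma polyOf_degree_lt {R : Type*} [CommRing R] (m : ℕ) (c : Fin m → R) :
    (polyOf m c).degree < (m : ℕ) := by
  show (∑ i : Fin m, C (c i) * X ^ (i : ℕ)).degree < ((m : ℕ) : WithBot ℕ)
  refine lt_of_le_of_lt (Polynomial.degree_sum_le _ _) ?_
  rw [Finset.sup_lt_iff (by exact_mod_cast WithBot.bot_lt_coe m)]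
  intro i _
  refine lt_of_le_of_lt (degree_C_mul_X_pow_le _ _) ?_
  exact_mod_cast i.isLt

lemma exists_ne_zero_of_finrank_lt {K V W : Type*} [Field K] [AddCommGroup V] [Module K V]
    [AddCommGroup W] [Module K W] [FiniteDimensional K V] [FiniteDimensional K W]
    (Λ : V →ₗ[K] W) (h : Module.finrank K W < Module.finrank K V) :
    ∃ c, c ≠ 0 ∧ Λ c = 0 := by
  by_contra h'
  push_neg at h'
  have hinj : Function.Injective Λ := by
    rw [← LinearMap.ker_eq_bot, LinearMap.ker_eq_bot']
    intro c hc
    by_contra hc0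
    exact h' c hc0 hc
  exact absurd (LinearMap.finrank_le_finrank_of_injective hinj) (not_le.mpr h)

lemma fzsum_degree_lt {n : ℕ} (z : Fin n → ℂ) :
    (∑ i : Fin n, C ((-1 : ℂ) ^ ((i : ℕ) + 1) * z i) * X ^ (n - ((i : ℕ) + 1))).degree
      < ((n : ℕ) : WithBot ℕ) := by
  refine lt_of_le_of_lt (Polynomial.degree_sum_le _ _) ?_
  rw [Finset.sup_lt_iff (by exact_mod_cast WithBot.bot_lt_coe n)]
  intro i _
  refine lt_of_le_of_lt (degree_C_mul_X_pow_le _ _) ?_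
  exact_mod_cast Nat.sub_lt_of_pos_le (Nat.succ_pos _) i.isLt


lemma fz_monic {n : ℕ} (z : Fin n → ℂ) : (fz z).Monic := by
  refine (monic_X_pow n).add_of_left ?_
  rw [degree_X_pow]
  exact fzsum_degree_lt z

lemma fz_natDegree {n : ℕ} (z : Fin n → ℂ) : (fz z).natDegree = n := by
  have h : (fz z).degree = n := by
    rw [fz, degree_add_eq_left_of_degree_lt, degree_X_pow]
    rw [degree_X_pow]; exact fzsum_degree_lt z
  exact natDegree_eq_of_degree_eq_some h

lemma fz_roots_card {n : ℕ} (z : Fin n → ℂ) : Multiset.card (fz z).roots = n := by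
  have h := splits_iff_card_roots.mp (IsAlgClosed.splits (fz z))
  rw [fz_natDegree z] at h
  exact h

lemma root_bound {P : ℂ[X]} (hP : P.Monic) {w : ℂ} (hw : P.eval w = 0) :
    ‖w‖ ≤ max 1 (∑ i ∈ Finset.range P.natDegree, ‖P.coeff i‖) := by
  by_cases h1 : ‖w‖ ≤ 1
  · exact le_trans h1 (le_max_left _ _)
  push_neg at h1
  refine le_trans ?_ (le_max_right _ _)
  set m := P.natDegree with hm
  have hm1 : 1 ≤ m := by
    by_contra h
    have : m = 0 := by omega
    have : P = 1 := hP.natDegree_eq_zero.mp this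
    rw [this] at hw; simp at hw
  have hsum := hP.as_sum
  rw [hsum] at hw
  simp only [eval_add, eval_pow, eval_X, eval_finset_sum, eval_mul, eval_C] at hw
  have hweq : w ^ m = -∑ i ∈ Finset.range m, P.coeff i * w ^ i :=
    eq_neg_of_add_eq_zero_left hw
  have hkey : ‖w‖ ^ m ≤ (∑ i ∈ Finset.range m, ‖P.coeff i‖) * ‖w‖ ^ (m - 1) := by
    calc ‖w‖ ^ m = ‖w ^ m‖ := (norm_pow w m).symm
      _ = ‖∑ i ∈ Finset.range m, P.coeff i * w ^ i‖ := by rw [hweq, norm_neg]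
      _ ≤ ∑ i ∈ Finset.range m, ‖P.coeff i * w ^ i‖ := norm_sum_le _ _
      _ ≤ ∑ i ∈ Finset.range m, ‖P.coeff i‖ * ‖w‖ ^ (m - 1) := by
          refine Finset.sum_le_sum fun i hi => ?_
          rw [norm_mul, norm_pow]
          refine mul_le_mul_of_nonneg_left ?_ (norm_nonneg _)
          exact pow_le_pow_right₀ (le_of_lt h1) (by
            have := Finset.mem_range.mp hi; omega)
      _ = (∑ i ∈ Finset.range m, ‖P.coeff i‖) * ‖w‖ ^ (m - 1) := by
          rw [Finset.sum_mul]
  have hpow : ‖w‖ ^ m = ‖w‖ * ‖w‖ ^ (m - 1) := by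
    rw [← pow_succ']
    congr 1
    omega
  rw [hpow] at hkey
  have hApos : 0 < ‖w‖ ^ (m - 1) := pow_pos (lt_trans one_pos h1) _
  exact le_of_mul_le_mul_right hkey hApos

lemma eval_bound {p : ℂ[X]} {m : ℕ} (h : p.natDegree < m) {w : ℂ} {R : ℝ}
    (hw : ‖w‖ ≤ R) (hR : 1 ≤ R) :
    ‖p.eval w‖ ≤ ∑ i ∈ Finset.range m, ‖p.coeff i‖ * R ^ i := by
  conv_lhs => rw [p.as_sum_range' m h]
  simp only [eval_finset_sum, eval_monomial]
  refine le_trans (norm_sum_le _ _) (Finset.sum_le_sum fun i _ => ?_)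
  rw [norm_mul, norm_pow]
  refine mul_le_mul_of_nonneg_left ?_ (norm_nonneg _)
  exact pow_le_pow_left₀ (norm_nonneg _) hw i

lemma norm_multiset_prod_c (s : Multiset ℂ) : ‖s.prod‖ = (s.map fun x => ‖x‖).prod := by
  induction s using Multiset.induction_on with
  | empty => simp
  | cons a s ih => simp [norm_mul, ih]

lemma multiset_prod_le {M : Multiset ℝ} {δ : ℝ} (hδ : 0 ≤ δ) (h : ∀ x ∈ M, δ ≤ x) :
    δ ^ Multiset.card M ≤ M.prod := by
  induction M using Multiset.induction_on with
  | empty => simp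
  | cons a s ih =>
    simp only [Multiset.card_cons, Multiset.prod_cons, pow_succ']
    refine mul_le_mul (h a (Multiset.mem_cons_self a s)) (ih fun x hx => h x (Multiset.mem_cons_of_mem hx)) (pow_nonneg hδ _) ?_
    exact le_trans hδ (h a (Multiset.mem_cons_self a s))

lemma upper_perturb (M : Multiset ℂ) (hM : 0 < Multiset.card M)
    (him : ∀ μ ∈ M, 0 < μ.im) (p Q : ℂ[X])
    (hp : p.degree < ((Multiset.card M : ℕ) : WithBot ℕ)) (hQ : Q ≠ 0)
    (hQroots : ∀ w ∈ Q.roots, 0 ≤ w.im) :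
    ∃ ε > 0, ∀ t : ℂ, ‖t‖ < ε →
      ∀ w ∈ (((M.map fun μ => X - C μ).prod + C t * p) * Q).roots, 0 ≤ w.im := by
  classical
  set m := Multiset.card M with hmdef
  set P : ℂ[X] := (M.map fun μ => X - C μ).prod with hPdef
  have hPmonic : P.Monic :=
    monic_multiset_prod_of_monic _ _ fun μ _ => monic_X_sub_C μ
  have hPdeg : P.natDegree = m := by
    rw [hPdef, natDegree_multiset_prod_X_sub_C_eq_card]
  have hPdegree : P.degree = (m : WithBot ℕ) := by
    rw [← hPdeg]; exact degree_eq_natDegree hPmonic.ne_zero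
  have hpnat : p.natDegree < m := by
    rcases eq_or_ne p 0 with rfl | hp0
    · simpa using hM
    · exact (natDegree_lt_iff_degree_lt hp0).mpr hp
  -- δ : minimum imaginary part
  have hMne : M.toFinset.Nonempty :=
    Multiset.toFinset_nonempty.mpr (Multiset.card_pos.mp hM)
  set δ : ℝ := M.toFinset.inf' hMne Complex.im with hδdef
  have hδpos : 0 < δ := by
    rw [hδdef, Finset.lt_inf'_iff]
    intro μ hμ
    exact him μ (Multiset.mem_toFinset.mp hμ)
  have hδle : ∀ μ ∈ M, δ ≤ μ.im := fun μ hμ =>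
    Finset.inf'_le _ (Multiset.mem_toFinset.mpr hμ)
  set R : ℝ := max 1 (∑ i ∈ Finset.range m, (‖P.coeff i‖ + ‖p.coeff i‖)) with hRdef
  have hR1 : 1 ≤ R := le_max_left _ _
  set Cp : ℝ := ∑ i ∈ Finset.range m, ‖p.coeff i‖ * R ^ i with hCpdef
  have hCp0 : 0 ≤ Cp := Finset.sum_nonneg fun i _ =>
    mul_nonneg (norm_nonneg _) (pow_nonneg (by linarith) _)
  refine ⟨min 1 (δ ^ m / (Cp + 1)), lt_min one_pos (div_pos (pow_pos hδpos m) (by linarith)), ?_⟩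
  intro t ht w hw
  have ht1 : ‖t‖ ≤ 1 := le_of_lt (lt_of_lt_of_le ht (min_le_left _ _))
  have ht2 : ‖t‖ ≤ δ ^ m / (Cp + 1) := le_of_lt (lt_of_lt_of_le ht (min_le_right _ _))
  set Pt : ℂ[X] := P + C t * p with hPtdef
  have hCtp : (C t * p).degree < P.degree := by
    rw [hPdegree]
    refine lt_of_le_of_lt (le_trans (degree_mul_le _ _) ?_) hp
    calc (C t).degree + p.degree ≤ 0 + p.degree := add_le_add degree_C_le le_rfl
      _ = p.degree := zero_add _
  have hPtmonic : Pt.Monic := hPmonic.add_of_left hCtp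
  have hPtne : Pt ≠ 0 := hPtmonic.ne_zero
  rw [roots_mul (mul_ne_zero hPtne hQ), Multiset.mem_add] at hw
  rcases hw with hw | hw
  · -- root of perturbed part : show 0 ≤ w.im
    by_contra hwim
    push_neg at hwim
    have hweval : Pt.eval w = 0 := (mem_roots'.mp hw).2
    have hsum0 : P.eval w + t * p.eval w = 0 := by
      simpa [hPtdef, eval_add, eval_mul, eval_C] using hweval
    have hPev : P.eval w = -(t * p.eval w) := eq_neg_of_add_eq_zero_left hsum0
    have hPev_prod : P.eval w = (M.map fun μ => w - μ).prod := by
      rw [hPdef, eval_multiset_prod, Multiset.map_map]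
      congr 1
      refine Multiset.map_congr rfl fun μ _ => ?_
      simp
    have hlow : δ ^ m ≤ ‖P.eval w‖ := by
      rw [hPev_prod, norm_multiset_prod_c, Multiset.map_map]
      have hcard : m = Multiset.card (M.map fun μ => ((‖·‖) ∘ fun μ => w - μ) μ) := by
        rw [Multiset.card_map]
      rw [hcard]
      refine multiset_prod_le hδpos.le fun x hx => ?_
      obtain ⟨μ, hμ, rfl⟩ := Multiset.mem_map.mp hx
      show δ ≤ ‖w - μ‖
      calc δ ≤ (μ - w).im := by
              rw [Complex.sub_im]; have := hδle μ hμ; linarith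
        _ ≤ |(μ - w).im| := le_abs_self _
        _ ≤ ‖μ - w‖ := Complex.abs_im_le_norm _
        _ = ‖w - μ‖ := by rw [norm_sub_rev]
    have hPtdeg : Pt.natDegree = m := by
      have hd : Pt.degree = P.degree := degree_add_eq_left_of_degree_lt hCtp
      rw [hPdegree] at hd
      exact natDegree_eq_of_degree_eq_some hd
    have hwR : ‖w‖ ≤ R := by
      refine le_trans (root_bound hPtmonic hweval) (max_le ?_ ?_)
      · exact hR1
      rw [hPtdeg]
      refine le_trans (Finset.sum_le_sum fun i _ => ?_) (le_max_right _ _)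
      show ‖Pt.coeff i‖ ≤ ‖P.coeff i‖ + ‖p.coeff i‖
      have h1' : Pt.coeff i = P.coeff i + t * p.coeff i := by
        rw [hPtdef, coeff_add, coeff_C_mul]
      rw [h1']
      refine le_trans (norm_add_le _ _) ?_
      rw [norm_mul]
      nlinarith [norm_nonneg (p.coeff i), norm_nonneg t, norm_nonneg (P.coeff i)]
    have hup : ‖p.eval w‖ ≤ Cp := eval_bound hpnat hwR hR1
    have h1 : δ ^ m ≤ ‖t‖ * ‖p.eval w‖ := by
      calc δ ^ m ≤ ‖P.eval w‖ := hlow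
        _ = ‖t‖ * ‖p.eval w‖ := by rw [hPev, norm_neg, norm_mul]
    have h3' : ‖t‖ * (Cp + 1) ≤ δ ^ m := (le_div_iff₀ (by linarith)).mp ht2
    have hta : ‖t‖ ≤ 0 := by
      nlinarith [mul_le_mul_of_nonneg_left hup (norm_nonneg t)]
    have ht0 : ‖t‖ = 0 := le_antisymm hta (norm_nonneg t)
    rw [ht0, zero_mul] at h1
    linarith [pow_pos hδpos m]
  · exact hQroots w hw

lemma real_perturb (F : Finset ℝ) (hs : 0 < F.card) (u : ℝ[X])
    (hu : u.degree < ((F.card : ℕ) : WithBot ℕ)) (D : ℂ[X]) (hD : D ≠ 0)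
    (hDroots : ∀ w ∈ D.roots, 0 ≤ w.im) :
    ∃ ε > 0, ∀ t : ℝ, |t| < ε →
      ∀ w ∈ ((Polynomial.map (algebraMap ℝ ℂ) ((∏ a ∈ F, (X - C a)) + C t * u)) * D).roots,
        0 ≤ w.im := by
  classical
  set s := F.card with hsdef
  have hFne : F.Nonempty := Finset.card_pos.mp hs
  set r : Fin s ↪o ℝ := F.orderEmbOfFin rfl with hrdef
  have hrmem : ∀ i, r i ∈ F := fun i => Finset.orderEmbOfFin_mem F rfl i
  -- gap constant γ
  set G : Finset ℝ :=
    insert (1 : ℝ) (((F ×ˢ F).filter fun pr => pr.1 < pr.2).image fun pr => pr.2 - pr.1)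
    with hGdef
  have hGne : G.Nonempty := ⟨1, Finset.mem_insert_self _ _⟩
  set γ : ℝ := G.min' hGne / 2 with hγdef
  have hmin'pos : 0 < G.min' hGne := by
    rw [Finset.lt_min'_iff]
    intro b hb
    rw [hGdef, Finset.mem_insert] at hb
    rcases hb with rfl | hb
    · exact one_pos
    · obtain ⟨pr, hpr, rfl⟩ := Finset.mem_image.mp hb
      have := (Finset.mem_filter.mp hpr).2
      linarith
  have hγpos : 0 < γ := by rw [hγdef]; linarith
  have hγlt : ∀ a ∈ F, ∀ b ∈ F, a < b → γ < b - a := by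
    intro a ha b hb hab
    have hmem : b - a ∈ G := by
      rw [hGdef]
      refine Finset.mem_insert_of_mem (Finset.mem_image.mpr ⟨(a, b), ?_, rfl⟩)
      exact Finset.mem_filter.mpr ⟨Finset.mem_product.mpr ⟨ha, hb⟩, hab⟩
    have := Finset.min'_le G _ hmem
    rw [hγdef]; linarith
  -- sample points
  set x : Fin (s + 1) → ℝ :=
    fun j => if h : (j : ℕ) < s then r ⟨(j : ℕ), h⟩ - γ else F.max' hFne + 1 with hxdef
  have fact2 : ∀ (j : Fin (s + 1)) (i : Fin s), (j : ℕ) ≤ (i : ℕ) → x j < r i := by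
    intro j i hji
    have hj : (j : ℕ) < s := lt_of_le_of_lt hji i.isLt
    have hx : x j = r ⟨(j : ℕ), hj⟩ - γ := by rw [hxdef]; exact dif_pos hj
    rw [hx]
    have : r ⟨(j : ℕ), hj⟩ ≤ r i := r.monotone (by exact hji)
    linarith
  have fact1 : ∀ (j : Fin (s + 1)) (i : Fin s), (i : ℕ) < (j : ℕ) → r i < x j := by
    intro j i hij
    by_cases hj : (j : ℕ) < s
    · have hx : x j = r ⟨(j : ℕ), hj⟩ - γ := by rw [hxdef]; exact dif_pos hj
      rw [hx]
      have h1 : r i < r ⟨(j : ℕ), hj⟩ := r.strictMono (by exact hij)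
      have h2 := hγlt _ (hrmem i) _ (hrmem ⟨(j : ℕ), hj⟩) h1
      linarith
    · have hx : x j = F.max' hFne + 1 := by rw [hxdef]; exact dif_neg hj
      rw [hx]
      have := F.le_max' (r i) (hrmem i)
      linarith
  have xmono : ∀ j j' : Fin (s + 1), j < j' → x j < x j' := by
    intro j j' h
    have hj : (j : ℕ) < s := by
      have h1 : (j : ℕ) < (j' : ℕ) := h
      have h2 : (j' : ℕ) ≤ s := Nat.lt_succ_iff.mp j'.isLt
      omega
    exact lt_trans (fact2 j ⟨(j : ℕ), hj⟩ le_rfl) (fact1 j' ⟨(j : ℕ), hj⟩ h)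
  -- the base polynomial q
  set q : ℝ[X] := ∏ a ∈ F, (X - C a) with hqdef
  have hqmonic : q.Monic := monic_prod_of_monic _ _ fun a _ => monic_X_sub_C a
  have hqnatdeg : q.natDegree = s := by
    rw [hqdef, natDegree_prod _ _ fun a _ => X_sub_C_ne_zero a]
    simp [natDegree_X_sub_C, hsdef]
  have hFimg : F = Finset.image (fun i => r i) Finset.univ := by
    ext a
    simp only [Finset.mem_image, Finset.mem_univ, true_and]
    constructor
    · intro ha
      have : a ∈ Set.range r := by rw [Finset.range_orderEmbOfFin]; exact ha
      exact this
    · rintro ⟨i, rfl⟩; exact hrmem i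
  have hevalFin : ∀ y : ℝ, q.eval y = ∏ i : Fin s, (y - r i) := by
    intro y
    rw [hqdef]
    rw [hFimg, Finset.prod_image (fun i _ j _ h => r.injective h)]
    simp [eval_prod]
  -- q has opposite signs at adjacent sample points
  have hadj : ∀ j : Fin s, q.eval (x j.castSucc) * q.eval (x j.succ) < 0 := by
    intro j
    rw [hevalFin, hevalFin, ← Finset.prod_mul_distrib]
    have hgj : (x j.castSucc - r j) * (x j.succ - r j) < 0 := by
      refine mul_neg_of_neg_of_pos (sub_neg.mpr ?_) (sub_pos.mpr ?_)
      · exact fact2 j.castSucc j (by simp)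
      · exact fact1 j.succ j (by simp)
    have hgi : ∀ i : Fin s, i ≠ j → 0 < (x j.castSucc - r i) * (x j.succ - r i) := by
      intro i hij
      rcases lt_or_gt_of_ne (fun h => hij (Fin.ext h) : (i : ℕ) ≠ (j : ℕ)) with h | h
      · refine mul_pos (sub_pos.mpr ?_) (sub_pos.mpr ?_)
        · exact fact1 j.castSucc i (by simpa using h)
        · exact fact1 j.succ i (by simp; omega)
      · refine mul_pos_of_neg_of_neg (sub_neg.mpr ?_) (sub_neg.mpr ?_)
        · exact fact2 j.castSucc i (by simp; omega)
        · exact fact2 j.succ i (by simp; omega)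
    calc (∏ i : Fin s, (x j.castSucc - r i) * (x j.succ - r i))
        = ((x j.castSucc - r j) * (x j.succ - r j)) *
            ∏ i ∈ Finset.univ.erase j, (x j.castSucc - r i) * (x j.succ - r i) :=
          (Finset.mul_prod_erase _ _ (Finset.mem_univ j)).symm
      _ < 0 := mul_neg_of_neg_of_pos hgj
          (Finset.prod_pos fun i hi => hgi i (Finset.ne_of_mem_erase hi))
  have hqxne : ∀ j : Fin (s + 1), q.eval (x j) ≠ 0 := by
    intro j
    rw [hevalFin]
    refine Finset.prod_ne_zero_iff.mpr fun i _ => sub_ne_zero.mpr ?_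
    rcases lt_or_ge (i : ℕ) (j : ℕ) with h | h
    · exact (fact1 j i h).ne'
    · exact (fact2 j i h).ne
  -- the threshold
  set ε : ℝ := Finset.univ.inf' (Finset.univ_nonempty)
      (fun j : Fin (s + 1) => |q.eval (x j)| / (|u.eval (x j)| + 1)) with hεdef
  have hεpos : 0 < ε := by
    rw [hεdef, Finset.lt_inf'_iff]
    intro j _
    exact div_pos (abs_pos.mpr (hqxne j)) (by positivity)
  refine ⟨ε, hεpos, ?_⟩
  intro t ht w hw
  set qt : ℝ[X] := q + C t * u with hqtdef
  have hqdeg' : q.degree = ((s : ℕ) : WithBot ℕ) := by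
    have h := degree_eq_natDegree hqmonic.ne_zero
    rw [hqnatdeg] at h
    exact h
  have hCtu : (C t * u).degree < q.degree := by
    rw [hqdeg']
    refine lt_of_le_of_lt (le_trans (degree_mul_le _ _) ?_) hu
    calc (C t).degree + u.degree ≤ 0 + u.degree := add_le_add degree_C_le le_rfl
      _ = u.degree := zero_add _
  have hqtmonic : qt.Monic := hqmonic.add_of_left hCtu
  have hqtdeg : qt.natDegree = s := by
    have hd : qt.degree = ((s : ℕ) : WithBot ℕ) := by
      rw [hqtdef, degree_add_eq_left_of_degree_lt hCtu, hqdeg']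
    exact natDegree_eq_of_degree_eq_some hd
  set Qt : ℂ[X] := Polynomial.map (algebraMap ℝ ℂ) qt with hQtdef
  have hQtmonic : Qt.Monic := hqtmonic.map _
  rw [roots_mul (mul_ne_zero hQtmonic.ne_zero hD), Multiset.mem_add] at hw
  rcases hw with hw | hw
  swap
  · exact hDroots w hw
  suffices him : w.im = 0 by rw [him]
  have hsame : ∀ j : Fin (s + 1), 0 < qt.eval (x j) * q.eval (x j) := by
    intro j
    have hεle : ε ≤ |q.eval (x j)| / (|u.eval (x j)| + 1) :=
      Finset.inf'_le _ (Finset.mem_univ j)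
    have h1 : |t| * (|u.eval (x j)| + 1) < |q.eval (x j)| := by
      rw [← lt_div_iff₀ (by positivity)]
      exact lt_of_lt_of_le ht hεle
    have h2 : |t * u.eval (x j)| < |q.eval (x j)| := by
      rw [abs_mul]
      nlinarith [abs_nonneg t, abs_nonneg (u.eval (x j))]
    have heval : qt.eval (x j) = q.eval (x j) + t * u.eval (x j) := by
      rw [hqtdef]; simp [eval_add, eval_mul, eval_C]
    rw [heval]
    set a := t * u.eval (x j)
    set b := q.eval (x j)
    have hb : b ≠ 0 := hqxne j
    have hbpos : 0 < |b| := abs_pos.mpr hb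
    nlinarith [neg_abs_le (a * b), abs_mul_abs_self b, (abs_mul a b).symm,
      mul_lt_mul_of_pos_right h2 hbpos, le_abs_self (a * b)]
  have hadj_t : ∀ j : Fin s, qt.eval (x j.castSucc) * qt.eval (x j.succ) < 0 := by
    intro j
    nlinarith [mul_pos (hsame j.castSucc) (hsame j.succ), hadj j]
  -- IVT
  have hroots : ∀ j : Fin s, ∃ y ∈ Set.Ioo (x j.castSucc) (x j.succ), qt.eval y = 0 := by
    intro j
    have hab : x j.castSucc ≤ x j.succ := (xmono _ _ (Fin.castSucc_lt_succ (i := j))).le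
    have hcont : ContinuousOn (fun y => qt.eval y) (Set.Icc (x j.castSucc) (x j.succ)) :=
      (Polynomial.continuous qt).continuousOn
    rcases mul_neg_iff.mp (hadj_t j) with ⟨hpos, hneg⟩ | ⟨hneg, hpos⟩
    · have h0 : (0 : ℝ) ∈ Set.Ioo (qt.eval (x j.succ)) (qt.eval (x j.castSucc)) := ⟨hneg, hpos⟩
      obtain ⟨y, hy, hy0⟩ := intermediate_value_Ioo' hab hcont h0
      exact ⟨y, hy, hy0⟩
    · have h0 : (0 : ℝ) ∈ Set.Ioo (qt.eval (x j.castSucc)) (qt.eval (x j.succ)) := ⟨hneg, hpos⟩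
      obtain ⟨y, hy, hy0⟩ := intermediate_value_Ioo hab hcont h0
      exact ⟨y, hy, hy0⟩
  choose y hy hy0 using hroots
  have hymono : StrictMono y := by
    intro j j' hjj
    have h1 : y j < x j.succ := (hy j).2
    have h2 : x j'.castSucc < y j' := (hy j').1
    have h3 : x j.succ ≤ x j'.castSucc := by
      rcases eq_or_lt_of_le (show j.succ ≤ j'.castSucc by
        rw [Fin.le_def]; simp [Fin.val_succ]; omega) with h | h
      · rw [h]
      · exact (xmono _ _ h).le
    linarith
  -- conclude : all complex roots of qt are real
  have hQtdeg : Qt.natDegree = s := by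
    rw [hQtdef, hqtmonic.natDegree_map, hqtdeg]
  have hQcard : Multiset.card Qt.roots = s := by
    have h := splits_iff_card_roots.mp (IsAlgClosed.splits Qt)
    rw [hQtdeg] at h
    exact h
  set Y : Finset ℂ := Finset.image (fun j => ((y j : ℝ) : ℂ)) Finset.univ with hYdef
  have hYcard : Y.card = s := by
    rw [hYdef, Finset.card_image_of_injective _
      (fun a b h => hymono.injective (Complex.ofReal_injective h) :
        Function.Injective fun j => ((y j : ℝ) : ℂ)),
      Finset.card_univ, Fintype.card_fin]
  have hYsub : Y ⊆ Qt.roots.toFinset := by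
    intro w hw
    obtain ⟨j, _, rfl⟩ := Finset.mem_image.mp hw
    rw [Multiset.mem_toFinset, mem_roots hQtmonic.ne_zero]
    show Qt.IsRoot _
    have hcoe : ((y j : ℝ) : ℂ) = algebraMap ℝ ℂ (y j) := rfl
    rw [IsRoot.def, hQtdef, eval_map, hcoe, eval₂_at_apply, hy0 j]
    simp
  have hYeq : Y = Qt.roots.toFinset := by
    refine Finset.eq_of_subset_of_card_le hYsub ?_
    rw [hYcard]
    exact le_trans (Multiset.toFinset_card_le _) (le_of_eq hQcard)
  have hwY : w ∈ Y := by
    rw [hYeq]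
    exact Multiset.mem_toFinset.mpr hw
  obtain ⟨j, _, rfl⟩ := Finset.mem_image.mp hwY
  simp


noncomputable def mulL (Q : ℂ[X]) : ℂ[X] →ₗ[ℂ] ℂ[X] where
  toFun p := p * Q
  map_add' p q := add_mul p q Q
  map_smul' c p := smul_mul_assoc c p Q

noncomputable def mapRC : ℝ[X] →ₗ[ℝ] ℂ[X] where
  toFun p := Polynomial.map (algebraMap ℝ ℂ) p
  map_add' p q := Polynomial.map_add _
  map_smul' t p := by
    ext i
    simp [Polynomial.coeff_map, Polynomial.coeff_smul, Complex.real_smul, smul_eq_mul]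

lemma not_local_extreme {n : ℕ} (A : Set (Fin n → ℂ)) (z w : Fin n → ℂ) (hw : w ≠ 0)
    (hA : ∃ ε > 0, ∀ t : ℝ, |t| < ε → z + (t : ℂ) • w ∈ A)
    (hext : IsLocalExtremePoint A z) : False := by
  obtain ⟨U, hU, hzext⟩ := hext
  obtain ⟨ε, hε, hA⟩ := hA
  obtain ⟨ρ, hρ, hball⟩ := Metric.mem_nhds_iff.mp hU
  have hwpos : 0 < ‖w‖ := norm_pos_iff.mpr hw
  set t₀ : ℝ := min (ε / 2) (ρ / (2 * (‖w‖ + 1))) with ht₀def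
  have ht₀pos : 0 < t₀ := lt_min (by linarith) (by positivity)
  have ht₀ε : t₀ < ε := lt_of_le_of_lt (min_le_left _ _) (by linarith)
  have ht₀ρ : t₀ * ‖w‖ < ρ := by
    have h1 : t₀ ≤ ρ / (2 * (‖w‖ + 1)) := min_le_right _ _
    have h2 : t₀ * ‖w‖ ≤ ρ / (2 * (‖w‖ + 1)) * ‖w‖ :=
      mul_le_mul_of_nonneg_right h1 (norm_nonneg w)
    have h3 : ρ / (2 * (‖w‖ + 1)) * ‖w‖ < ρ := by
      rw [div_mul_eq_mul_div, div_lt_iff₀ (by positivity)]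
      nlinarith
    linarith
  set zp := z + (t₀ : ℂ) • w with hzp
  set zm := z + ((-t₀ : ℝ) : ℂ) • w with hzm
  have hzpA : zp ∈ A := hA t₀ (by rw [abs_of_pos ht₀pos]; exact ht₀ε)
  have hzmA : zm ∈ A := hA (-t₀) (by rw [abs_neg, abs_of_pos ht₀pos]; exact ht₀ε)
  have hdist : ∀ c : ℝ, |c| = t₀ → z + (c : ℂ) • w ∈ U := by
    intro c hc
    apply hball
    rw [Metric.mem_ball, dist_eq_norm, add_sub_cancel_left, norm_smul, Complex.norm_real,
      Real.norm_eq_abs, hc]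
    exact ht₀ρ
  have hzpU : zp ∈ U := hdist t₀ (abs_of_pos ht₀pos)
  have hzmU : zm ∈ U := hdist (-t₀) (by rw [abs_neg]; exact abs_of_pos ht₀pos)
  have hzphull : zp ∈ convexHull ℝ (A ∩ U) := subset_convexHull ℝ _ ⟨hzpA, hzpU⟩
  have hzmhull : zm ∈ convexHull ℝ (A ∩ U) := subset_convexHull ℝ _ ⟨hzmA, hzmU⟩
  have hseg : z ∈ openSegment ℝ zp zm := by
    refine ⟨1/2, 1/2, by norm_num, by norm_num, by norm_num, ?_⟩
    rw [hzp, hzm]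
    push_cast
    module
  obtain ⟨hzp_eq, -⟩ := (mem_extremePoints.mp hzext).2 zp hzphull zm hzmhull hseg
  rw [hzp] at hzp_eq
  have : (t₀ : ℂ) • w = 0 := by
    have h := hzp_eq
    rwa [add_eq_left] at h
  rcases smul_eq_zero.mp this with h | h
  · exact absurd (by exact_mod_cast h : t₀ = 0) ht₀pos.ne'
  · exact hw h

open scoped Classical in
/-- Local extreme points of an `ℍ₊`-stable slice have at most `k` roots (with multiplicity)
in `ℍ₊ \ ℝ` and at most `2k` distinct real roots. -/
theorem stmt0 (n k : ℕ) (L : (Fin n → ℂ) →ₗ[ℂ] (Fin k → ℂ)) (hL : Function.Surjective L)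
    (a : Fin k → ℂ) (z : Fin n → ℂ)
    (hz : z ∈ upperStable n ∩ L ⁻¹' {a})
    (hext : IsLocalExtremePoint (upperStable n ∩ L ⁻¹' {a}) z) :
    Multiset.card ((fz z).roots.filter fun w => 0 < w.im) ≤ k ∧
    ((fz z).roots.toFinset.filter fun w => w.im = 0).card ≤ 2 * k := by
  classical
  obtain ⟨hzS, hzL⟩ := hz
  have hzLa : L z = a := hzL
  have hroot_im : ∀ w ∈ (fz z).roots, 0 ≤ w.im := hzS
  set R : Multiset ℂ := (fz z).roots with hRdef
  set Rp : Multiset ℂ := R.filter (fun w => 0 < w.im) with hRpdef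
  set R0 : Multiset ℂ := R.filter (fun w => w.im = 0) with hR0def
  have hsplit : Rp + R0 = R := by
    rw [hRpdef, hR0def]
    have h2 : R.filter (fun w => w.im = 0) = R.filter (fun w => ¬ 0 < w.im) := by
      apply Multiset.filter_congr
      intro w hw
      have := hroot_im w hw
      constructor
      · intro h; rw [h]; exact lt_irrefl 0
      · intro h; push_neg at h; linarith
    rw [h2, Multiset.filter_add_not]
  have hcardR : Multiset.card R = n := fz_roots_card z
  set P : ℂ[X] := (Rp.map fun μ => X - C μ).prod with hPdef
  set Q0 : ℂ[X] := (R0.map fun μ => X - C μ).prod with hQ0def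
  have hPmonic : P.Monic := monic_multiset_prod_of_monic _ _ fun μ _ => monic_X_sub_C μ
  have hQ0monic : Q0.Monic := monic_multiset_prod_of_monic _ _ fun μ _ => monic_X_sub_C μ
  have hf_eq : fz z = P * Q0 := by
    calc fz z = (R.map fun a => X - C a).prod :=
          (IsAlgClosed.splits (fz z)).eq_prod_roots_of_monic (fz_monic z)
      _ = ((Rp + R0).map fun a => X - C a).prod := by rw [hsplit]
      _ = P * Q0 := by rw [Multiset.map_add, Multiset.prod_add]
  have hQ0roots : ∀ w ∈ Q0.roots, 0 ≤ w.im := by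
    intro w hw
    rw [hQ0def, roots_multiset_prod_X_sub_C] at hw
    exact le_of_eq ((Multiset.mem_filter.mp hw).2).symm
  have hcards : Multiset.card Rp + Multiset.card R0 = n := by
    rw [← Multiset.card_add, hsplit, hcardR]
  constructor
  · -- at most k roots in the open upper half-plane
    by_contra hk'
    push_neg at hk'
    set m : ℕ := Multiset.card Rp with hmdef
    set Λ : (Fin m → ℂ) →ₗ[ℂ] (Fin k → ℂ) :=
      L ∘ₗ coeffRev n ∘ₗ mulL Q0 ∘ₗ polyOf m with hΛdef
    obtain ⟨c, hc0, hΛc⟩ := exists_ne_zero_of_finrank_lt Λ (by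
      rw [Module.finrank_fin_fun, Module.finrank_fin_fun]; exact hk')
    set p : ℂ[X] := polyOf m c with hpdef
    have hp0 : p ≠ 0 := polyOf_ne_zero hc0
    have hpdeg : p.degree < ((m : ℕ) : WithBot ℕ) := polyOf_degree_lt m c
    set v : ℂ[X] := p * Q0 with hvdef
    have hv0 : v ≠ 0 := mul_ne_zero hp0 hQ0monic.ne_zero
    have hvdeg : v.natDegree < n := by
      rw [hvdef, natDegree_mul hp0 hQ0monic.ne_zero]
      have h1 : p.natDegree < m := (natDegree_lt_iff_degree_lt hp0).mpr hpdeg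
      have h2 : Q0.natDegree = Multiset.card R0 := by
        rw [hQ0def]; exact natDegree_multiset_prod_X_sub_C_eq_card _
      omega
    set wv := coeffRev n v with hwvdef
    have hlin : linC n wv = v := linC_coeffRev v hvdeg
    have hwv0 : wv ≠ 0 := by
      intro h
      apply hv0
      rw [← hlin, h, map_zero]
    have hLwv : L wv = 0 := hΛc
    have hm0 : 0 < m := by omega
    obtain ⟨ε, hε, hstab⟩ := upper_perturb Rp hm0
      (fun μ hμ => (Multiset.mem_filter.mp hμ).2) p Q0 hpdeg hQ0monic.ne_zero hQ0roots
    refine not_local_extreme (upperStable n ∩ L ⁻¹' {a}) z wv hwv0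
      ⟨ε, hε, fun t ht => Set.mem_inter ?_ ?_⟩ hext
    · intro ω hω
      have hfzt : fz (z + (t : ℂ) • wv) = (P + C (t : ℂ) * p) * Q0 := by
        rw [fz_add, map_smul, hlin, hf_eq, hvdef, Polynomial.smul_eq_C_mul]
        ring
      refine hstab (t : ℂ) ?_ ω ?_
      · rw [Complex.norm_real, Real.norm_eq_abs]; exact ht
      · rwa [← hfzt]
    · show z + (t : ℂ) • wv ∈ L ⁻¹' {a}
      simp only [Set.mem_preimage, Set.mem_singleton_iff, map_add, LinearMap.map_smul,
        hLwv, hzLa, smul_zero, add_zero]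
  · -- at most 2k distinct real roots
    by_contra hk'
    push_neg at hk'
    set T : Finset ℂ := R.toFinset.filter (fun w => w.im = 0) with hTdef
    set s : ℕ := T.card with hsdef
    have hTF : T = R0.toFinset := by
      rw [hTdef, hR0def, Multiset.toFinset_filter]
    have hTval : T.val = R0.dedup := by rw [hTF]; exact Multiset.toFinset_val R0
    have hsR0 : Multiset.card R0.dedup = s := by
      rw [← hTval, hsdef]; rfl
    have hdle : R0.dedup ≤ R0 := Multiset.dedup_le R0
    have him0 : ∀ w ∈ R0, w.im = 0 := fun w hw => (Multiset.mem_filter.mp hw).2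
    set F : Finset ℝ := T.image Complex.re with hFdef
    have hre : ∀ w ∈ T, ((w.re : ℝ) : ℂ) = w := by
      intro w hw
      rw [hTdef] at hw
      have him : w.im = 0 := (Finset.mem_filter.mp hw).2
      exact Complex.ext (by simp) (by simp [him])
    have hinj : ∀ w ∈ T, ∀ w' ∈ T, w.re = w'.re → w = w' := by
      intro w hw w' hw' h
      rw [← hre w hw, ← hre w' hw', h]
    have hFcard : F.card = s := by
      rw [hFdef, Finset.card_image_of_injOn hinj, hsdef]
    set qR : ℝ[X] := ∏ aa ∈ F, (X - C aa) with hqRdef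
    have hqC : Polynomial.map (algebraMap ℝ ℂ) qR = (R0.dedup.map fun μ => X - C μ).prod := by
      rw [hqRdef, Polynomial.map_prod]
      calc (∏ aa ∈ F, Polynomial.map (algebraMap ℝ ℂ) (X - C aa))
          = ∏ aa ∈ F, (X - C ((aa : ℝ) : ℂ)) := by
            refine Finset.prod_congr rfl fun aa _ => ?_
            rw [Polynomial.map_sub, map_X, map_C]
            rfl
        _ = ∏ w ∈ T, (X - C ((w.re : ℝ) : ℂ)) := by rw [hFdef, Finset.prod_image hinj]
        _ = ∏ w ∈ T, (X - C w) := Finset.prod_congr rfl fun w hw => by rw [hre w hw]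
        _ = (T.val.map fun μ => X - C μ).prod := Finset.prod_eq_multiset_prod _ _
        _ = (R0.dedup.map fun μ => X - C μ).prod := by rw [hTval]
    set d : ℂ[X] := ((R0 - R0.dedup).map fun μ => X - C μ).prod with hddef
    have hdmonic : d.Monic := monic_multiset_prod_of_monic _ _ fun μ _ => monic_X_sub_C μ
    have hQ0fact : Q0 = Polynomial.map (algebraMap ℝ ℂ) qR * d := by
      rw [hqC, hddef, hQ0def, ← Multiset.prod_add, ← Multiset.map_add,
        add_tsub_cancel_of_le hdle]
    set D : ℂ[X] := d * P with hDdef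
    have hD0 : D ≠ 0 := mul_ne_zero hdmonic.ne_zero hPmonic.ne_zero
    have hDroots : ∀ w ∈ D.roots, 0 ≤ w.im := by
      intro w hw
      rw [hDdef, roots_mul (mul_ne_zero hdmonic.ne_zero hPmonic.ne_zero),
        Multiset.mem_add] at hw
      rcases hw with hw | hw
      · rw [hddef, roots_multiset_prod_X_sub_C] at hw
        exact le_of_eq (him0 w (Multiset.mem_of_le (tsub_le_self) hw)).symm
      · rw [hPdef, roots_multiset_prod_X_sub_C] at hw
        exact le_of_lt (Multiset.mem_filter.mp hw).2
    set Λ₂ : (Fin s → ℝ) →ₗ[ℝ] (Fin k → ℂ) :=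
      (LinearMap.restrictScalars ℝ L) ∘ₗ (LinearMap.restrictScalars ℝ (coeffRev n)) ∘ₗ
        (LinearMap.restrictScalars ℝ (mulL D)) ∘ₗ mapRC ∘ₗ polyOf s with hΛ₂def
    obtain ⟨c, hc0, hΛc⟩ := exists_ne_zero_of_finrank_lt Λ₂ (by
      rw [Module.finrank_fin_fun, Module.finrank_pi_fintype]
      simp only [Complex.finrank_real_complex, Finset.sum_const, Finset.card_univ,
        Fintype.card_fin, smul_eq_mul]
      omega)
    set u : ℝ[X] := polyOf s c with hudef
    have hu0 : u ≠ 0 := polyOf_ne_zero hc0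
    have hudeg : u.degree < ((F.card : ℕ) : WithBot ℕ) := by
      rw [hFcard]; exact polyOf_degree_lt s c
    set uC : ℂ[X] := Polynomial.map (algebraMap ℝ ℂ) u with huCdef
    have huC0 : uC ≠ 0 := by
      rw [huCdef]
      exact (Polynomial.map_ne_zero_iff (algebraMap ℝ ℂ).injective).mpr hu0
    set v : ℂ[X] := uC * D with hvdef
    have hv0 : v ≠ 0 := mul_ne_zero huC0 hD0
    have hvdeg : v.natDegree < n := by
      rw [hvdef, natDegree_mul huC0 hD0, hDdef,
        natDegree_mul hdmonic.ne_zero hPmonic.ne_zero]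
      have h1 : uC.natDegree = u.natDegree := by
        rw [huCdef]; exact natDegree_map_eq_of_injective (algebraMap ℝ ℂ).injective u
      have h2 : u.natDegree < s :=
        (natDegree_lt_iff_degree_lt hu0).mpr (polyOf_degree_lt s c)
      have h3 : d.natDegree = Multiset.card (R0 - R0.dedup) := by
        rw [hddef]; exact natDegree_multiset_prod_X_sub_C_eq_card _
      have h4 : P.natDegree = Multiset.card Rp := by
        rw [hPdef]; exact natDegree_multiset_prod_X_sub_C_eq_card _
      have h5 : Multiset.card (R0 - R0.dedup) = Multiset.card R0 - s := by
        rw [Multiset.card_sub hdle, hsR0]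
      have h6 : s ≤ Multiset.card R0 := by
        rw [← hsR0]; exact Multiset.card_le_card hdle
      omega
    set wv := coeffRev n v with hwvdef
    have hlin : linC n wv = v := linC_coeffRev v hvdeg
    have hwv0 : wv ≠ 0 := by
      intro h
      apply hv0
      rw [← hlin, h, map_zero]
    have hLwv : L wv = 0 := hΛc
    have hs0 : 0 < F.card := by rw [hFcard]; omega
    obtain ⟨ε, hε, hstab⟩ := real_perturb F hs0 u hudeg D hD0 hDroots
    refine not_local_extreme (upperStable n ∩ L ⁻¹' {a}) z wv hwv0
      ⟨ε, hε, fun t ht => Set.mem_inter ?_ ?_⟩ hext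
    · intro ω hω
      have hfzt : fz (z + (t : ℂ) • wv) =
          (Polynomial.map (algebraMap ℝ ℂ) (qR + C t * u)) * D := by
        rw [fz_add, map_smul, hlin, hf_eq, hQ0fact, hvdef, Polynomial.smul_eq_C_mul,
          Polynomial.map_add, Polynomial.map_mul, map_C, hDdef]
        have hCt : C ((algebraMap ℝ ℂ) t) = C ((t : ℝ) : ℂ) := rfl
        rw [hCt, ← huCdef]
        ring
      refine hstab t ht ω ?_
      rwa [← hfzt]
    · show z + (t : ℂ) • wv ∈ L ⁻¹' {a}
      simp only [Set.mem_preimage, Set.mem_singleton_iff, map_add, LinearMap.map_smul,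
        hLwv, hzLa, smul_zero, add_zero]
end

section
/- Let 2 ≤ k ≤ n and a = (a₁,…,a_k) ∈ ℂᵏ. Then the set 𝒮(a) = {z ∈ ℂⁿ : z₁ = a₁, …, z_k = a_k and all roots of f_z lie in the closed upper half-plane} is a compact subset of ℂⁿ. -/
open Polynomial

/-!
The slice is the image, under the continuous map sending a root vector `x ∈ ℂⁿ` to its
elementary symmetric functions, of the set of root vectors lying in the closed upper half-plane
with `e₁(x) = a₁, e₂(x) = a₂`. That set is closed, and it is bounded because
`∑ xᵢ² = a₁² - 2a₂` gives `∑ |xᵢ|² = Re (a₁² - 2a₂) + 2 ∑ (Im xᵢ)²`, while the nonnegative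
imaginary parts satisfy `∑ (Im xᵢ)² ≤ (∑ Im xᵢ)² = (Im a₁)²`.
-/

open Finset

section esymmMap

variable {R : Type*} [CommRing R] {n : ℕ}

noncomputable def esymmMap (x : Fin n → R) : Fin n → R :=
  fun i => (univ.val.map x).esymm (i + 1)

theorem continuous_esymmMap [TopologicalSpace R] [IsTopologicalRing R] :
    Continuous (esymmMap (R := R) (n := n)) := by
  refine continuous_pi fun i => ?_
  simp only [esymmMap, Finset.esymm_map_val]
  fun_prop

end esymmMap

section Newton

variable {R ι : Type*} [CommRing R] [Fintype ι]

theorem esymm_map_univ_val_eq_eval (x : ι → R) (k : ℕ) :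
    (univ.val.map x).esymm k = MvPolynomial.eval x (MvPolynomial.esymm ι R k) :=
  (MvPolynomial.aeval_esymm_eq_multiset_esymm ι R k x).symm

theorem esymm_one_map_univ_val (x : ι → R) : (univ.val.map x).esymm 1 = ∑ i, x i := by
  simp [esymm_map_univ_val_eq_eval, MvPolynomial.esymm_one]

theorem sum_sq_eq_sq_sum_sub_two_mul_esymm (x : ι → R) :
    ∑ i, x i ^ 2 = (∑ i, x i) ^ 2 - 2 * (univ.val.map x).esymm 2 := by
  have hfilter : (antidiagonal 2).filter (fun a => a.1 ∈ Set.Ioo 0 2) = {(1, 1)} := by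
    decide
  have hnewton := MvPolynomial.psum_eq_mul_esymm_sub_sum ι R 2 two_pos
  rw [hfilter, sum_singleton, MvPolynomial.esymm_one, MvPolynomial.psum_one] at hnewton
  have h := congrArg (MvPolynomial.eval x) hnewton
  simp only [MvPolynomial.psum, map_sub, map_mul, map_pow, map_neg, map_one, map_sum,
    MvPolynomial.eval_X, map_natCast] at h
  rw [h, esymm_map_univ_val_eq_eval]
  push_cast
  ring

end Newton

section fz

variable {n : ℕ}

theorem coeff_fz (z : Fin n → ℂ) (i : Fin n) :
    (fz z).coeff (n - (i + 1)) = (-1) ^ ((i : ℕ) + 1) * z i := by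
  have hi := i.isLt
  rw [fz, coeff_add, coeff_X_pow, if_neg (by omega), finsetSum_coeff, zero_add,
    Finset.sum_eq_single i]
  · rw [coeff_C_mul, coeff_X_pow, if_pos rfl, mul_one]
  · intro j _ hji
    have hj := j.isLt
    rw [coeff_C_mul, coeff_X_pow, if_neg (fun h => hji (Fin.ext (by omega))), mul_zero]
  · simp

theorem degree_fz_sub_X_pow_lt (z : Fin n → ℂ) : (fz z - X ^ n).degree < (n : WithBot ℕ) := by
  rw [fz.eq_1, add_sub_cancel_left]
  refine (degree_sum_le _ _).trans_lt ((Finset.sup_lt_iff (WithBot.bot_lt_coe n)).2 ?_)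
  intro i _
  refine (degree_C_mul_X_pow_le _ _).trans_lt ?_
  exact WithBot.coe_lt_coe.2 (Nat.sub_lt_of_pos_le (Nat.succ_pos _) i.isLt)

theorem monic_fz (z : Fin n → ℂ) : (fz z).Monic := by
  simpa using monic_X_pow_add (degree_fz_sub_X_pow_lt z)

theorem natDegree_fz (z : Fin n → ℂ) : (fz z).natDegree = n := by
  rw [← add_sub_cancel (X ^ n) (fz z), natDegree_add_eq_left_of_degree_lt, natDegree_X_pow]
  rw [degree_X_pow]
  exact degree_fz_sub_X_pow_lt z

theorem card_roots_fz (z : Fin n → ℂ) : Multiset.card (fz z).roots = n :=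
  (splits_iff_card_roots.1 (IsAlgClosed.splits _)).trans (natDegree_fz z)

theorem eq_esymm_roots_fz (z : Fin n → ℂ) (i : Fin n) :
    z i = (fz z).roots.esymm (i + 1) := by
  have hi := i.isLt
  have h := coeff_eq_esymm_roots_of_splits (IsAlgClosed.splits (fz z))
    (k := n - (i + 1)) (by rw [natDegree_fz]; omega)
  rw [coeff_fz, (monic_fz z).leadingCoeff, one_mul, natDegree_fz, Nat.sub_sub_self hi] at h
  exact mul_left_cancel₀ (pow_ne_zero _ (neg_ne_zero.2 one_ne_zero)) h

theorem fz_esymmMap (x : Fin n → ℂ) :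
    fz (esymmMap x) = ((univ.val.map x).map fun t => X - C t).prod := by
  rw [Multiset.prod_X_sub_X_eq_sum_esymm, Finset.sum_range_succ', fz, add_comm]
  simp only [Multiset.card_map, card_val, card_univ, Fintype.card_fin]
  congr 1
  · rw [← Fin.sum_univ_eq_sum_range (fun j => (-1 : ℂ[X]) ^ (j + 1) *
      (C ((univ.val.map x).esymm (j + 1)) * X ^ (n - (j + 1))))]
    refine Finset.sum_congr rfl fun j _ => ?_
    simp only [esymmMap, map_mul, map_pow, map_neg, map_one]
    ring
  · simp [Multiset.esymm]

theorem roots_fz_esymmMap (x : Fin n → ℂ) : (fz (esymmMap x)).roots = univ.val.map x := by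
  rw [fz_esymmMap, roots_multiset_prod_X_sub_C]

end fz

theorem Multiset.exists_map_univ_val_eq {α : Type*} {n : ℕ} (s : Multiset α)
    (h : Multiset.card s = n) : ∃ x : Fin n → α, univ.val.map x = s := by
  subst h
  refine ⟨fun i => s.toList.get (i.cast (Multiset.length_toList s).symm), ?_⟩
  conv_rhs => rw [← Multiset.coe_toList s, ← List.ofFn_get s.toList]
  rw [Fin.univ_val_map]
  congr 1
  exact List.ofFn_congr (Multiset.length_toList s).symm _

theorem image_esymmMap_setOf_forall {n : ℕ} (p : ℂ → Prop) :
    esymmMap '' {x : Fin n → ℂ | ∀ i, p (x i)} = {z | ∀ w ∈ (fz z).roots, p w} := by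
  ext z
  constructor
  · rintro ⟨x, hx, rfl⟩ w hw
    rw [roots_fz_esymmMap] at hw
    obtain ⟨i, -, rfl⟩ := Multiset.mem_map.1 hw
    exact hx i
  · intro hz
    obtain ⟨x, hx⟩ := (fz z).roots.exists_map_univ_val_eq (card_roots_fz z)
    refine ⟨x, fun i => hz _ (hx ▸ Multiset.mem_map_of_mem x (mem_univ i)), ?_⟩
    funext i
    rw [eq_esymm_roots_fz z i, ← hx]
    rfl

theorem norm_sq_le_of_forall_im_nonneg {ι : Type*} [Fintype ι] {x : ι → ℂ}
    (hx : ∀ i, 0 ≤ (x i).im) (j : ι) :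
    ‖x j‖ ^ 2 ≤ (∑ i, x i ^ 2).re + 2 * (∑ i, x i).im ^ 2 := by
  have hnorm (w : ℂ) : ‖w‖ ^ 2 = (w ^ 2).re + 2 * w.im ^ 2 := by
    rw [Complex.sq_norm, Complex.normSq_apply, sq w, Complex.mul_re]
    ring
  calc ‖x j‖ ^ 2 ≤ ∑ i, ‖x i‖ ^ 2 :=
        single_le_sum (f := fun i => ‖x i‖ ^ 2) (fun i _ => by positivity) (mem_univ j)
    _ = (∑ i, x i ^ 2).re + 2 * ∑ i, (x i).im ^ 2 := by
        simp only [hnorm, sum_add_distrib, Complex.re_sum, mul_sum]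
    _ ≤ (∑ i, x i ^ 2).re + 2 * (∑ i, x i).im ^ 2 := by
        rw [Complex.im_sum]
        gcongr
        exact sum_sq_le_sq_sum_of_nonneg fun i _ => hx i

theorem isBounded_setOf_im_nonneg_sum_eq_sum_sq_eq {ι : Type*} [Fintype ι] (c d : ℂ) :
    Bornology.IsBounded
      {x : ι → ℂ | (∀ i, 0 ≤ (x i).im) ∧ ∑ i, x i = c ∧ ∑ i, x i ^ 2 = d} := by
  rw [isBounded_iff_forall_norm_le]
  refine ⟨√(d.re + 2 * c.im ^ 2), fun x ⟨hx, hc, hd⟩ => ?_⟩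
  refine (pi_norm_le_iff_of_nonneg (Real.sqrt_nonneg _)).2 fun j => ?_
  refine Real.le_sqrt_of_sq_le ?_
  simpa [hc, hd] using norm_sq_le_of_forall_im_nonneg hx j

theorem isCompact_im_nonneg_inter_preimage_esymmMap {n k : ℕ} (hk : 2 ≤ k) (hkn : k ≤ n)
    (a : Fin k → ℂ) :
    IsCompact ({x : Fin n → ℂ | ∀ i, 0 ≤ (x i).im} ∩
      esymmMap ⁻¹' {z | ∀ i : Fin k, z (Fin.castLE hkn i) = a i}) := by
  refine Metric.isCompact_of_isClosed_isBounded ?_ ?_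
  · simp only [Set.ofPred_forall]
    exact (isClosed_iInter fun i => isClosed_le continuous_const (by fun_prop)).inter
      ((isClosed_iInter fun i => isClosed_eq (by fun_prop) continuous_const).preimage
        continuous_esymmMap)
  · refine (isBounded_setOf_im_nonneg_sum_eq_sum_sq_eq (a ⟨0, by omega⟩)
      (a ⟨0, by omega⟩ ^ 2 - 2 * a ⟨1, by omega⟩)).subset fun x ⟨hx, hfix⟩ => ⟨hx, ?_⟩
    have he₁ : (univ.val.map x).esymm 1 = a ⟨0, by omega⟩ := hfix ⟨0, by omega⟩
    have he₂ : (univ.val.map x).esymm 2 = a ⟨1, by omega⟩ := hfix ⟨1, by omega⟩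
    rw [sum_sq_eq_sq_sum_sub_two_mul_esymm, ← esymm_one_map_univ_val, he₁, he₂]
    exact ⟨rfl, rfl⟩

/-- For `2 ≤ k ≤ n`, the slice `𝒮(a)` of upper half-plane stable monic polynomials whose
first `k` coefficients are fixed by `a` is compact. -/
theorem stmt6 (n k : ℕ) (h2 : 2 ≤ k) (hkn : k ≤ n) (a : Fin k → ℂ) :
    IsCompact {z : Fin n → ℂ |
      (∀ i : Fin k, z (Fin.castLE hkn i) = a i) ∧ ∀ w ∈ (fz z).roots, 0 ≤ w.im} := by
  have h := (isCompact_im_nonneg_inter_preimage_esymmMap h2 hkn a).image continuous_esymmMap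
  rwa [Set.image_inter_preimage, image_esymmMap_setOf_forall (fun w => 0 ≤ w.im),
    Set.inter_comm] at h
end

section
/- Let f ∈ ℂ[X₁,…,Xₙ] be a symmetric polynomial of degree d ≤ n. Then there exists a polynomial g ∈ ℂ[Z₁,…,Z_d] such that f = g(e₁,…,e_d), and moreover g has degree at most 1 in each of the variables Z_{⌊d/2⌋+1},…,Z_d. -/
/-!
Write `f = p(e₁,…,eₙ)` and give the variable `Zᵢ` weight `i`. Since `eᵢ` is homogeneous of
degree `i`, the substitution `Zᵢ ↦ eᵢ` sends the weighted-homogeneous component of `p` of weight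
`m` to the homogeneous component of `f` of degree `m`; as the substitution is injective, every
monomial `Z^t` of `p` has weight `∑ i tᵢ ≤ deg f = d`. So `i tᵢ ≤ d` for all `i`: the variables
`Zᵢ` with `i > d` do not occur, and those with `2i > d` occur at most linearly.
-/

open MvPolynomial Finsupp

namespace MvPolynomial

section Semiring

variable {σ τ R S : Type*} [CommSemiring R] [CommSemiring S] [Algebra R S]

theorem isHomogeneous_esymm [Fintype σ] (k : ℕ) : (esymm σ R k).IsHomogeneous k := by
  refine IsHomogeneous.sum _ _ _ fun s hs => ?_
  simpa [(Finset.mem_powersetCard.1 hs).2] using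
    IsHomogeneous.prod s X (fun _ => 1) fun i _ => isHomogeneous_X R i

variable {w : σ → ℕ} {g : σ → MvPolynomial τ S}

theorem isHomogeneous_aeval_monomial (hg : ∀ i, (g i).IsHomogeneous (w i)) (t : σ →₀ ℕ)
    (c : R) : (aeval g (monomial t c)).IsHomogeneous (weight w t) := by
  rw [aeval_monomial, Finsupp.prod, weight_apply, Finsupp.sum]
  simpa [smul_eq_mul, mul_comm] using
    (isHomogeneous_C τ (algebraMap R S c)).mul
      (IsHomogeneous.prod t.support _ _ fun i _ => (hg i).pow (t i))

theorem homogeneousComponent_aeval (hg : ∀ i, (g i).IsHomogeneous (w i)) (m : ℕ)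
    (φ : MvPolynomial σ R) :
    homogeneousComponent m (aeval g φ) = aeval g (weightedHomogeneousComponent w m φ) := by
  classical
  conv_lhs => rw [φ.as_sum]
  rw [weightedHomogeneousComponent_apply, map_sum, map_sum, map_sum, Finset.sum_filter]
  refine Finset.sum_congr rfl fun t _ => ?_
  rw [homogeneousComponent_of_mem (isHomogeneous_aeval_monomial hg t _)]
  exact if_congr eq_comm rfl rfl

theorem exists_rename_castLE_eq {n d : ℕ} (h : d ≤ n) (p : MvPolynomial (Fin n) R)
    (hp : ∀ i : Fin n, d ≤ i → p.degreeOf i = 0) :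
    ∃ q : MvPolynomial (Fin d) R, rename (Fin.castLE h) q = p := by
  refine exists_rename_eq_of_vars_subset_range p _ (Fin.castLE_injective h) fun i hi => ?_
  have hid : (i : ℕ) < d := by
    by_contra! hdi
    exact (mem_vars_iff_degreeOf_ne_zero.1 hi) (hp i hdi)
  exact ⟨⟨i, hid⟩, rfl⟩

end Semiring

section Ring

variable {σ R : Type*} [Fintype σ] [CommRing R] {n : ℕ}

theorem aeval_esymm_injective (hn : n ≤ Fintype.card σ) :
    Function.Injective (aeval (R := R) fun i : Fin n => esymm σ R (i + 1)) := by
  intro p q hpq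
  apply esymmAlgHom_injective R hn
  ext1
  simpa only [esymmAlgHom_apply] using hpq

theorem weight_le_totalDegree_aeval_esymm (hn : n ≤ Fintype.card σ) {p : MvPolynomial (Fin n) R}
    {t : Fin n →₀ ℕ} (ht : t ∈ p.support) :
    weight (fun i : Fin n => (i : ℕ) + 1) t ≤
      (aeval (fun i : Fin n => esymm σ R (i + 1)) p).totalDegree := by
  classical
  by_contra! hlt
  have hcomp := homogeneousComponent_eq_zero _ _ hlt
  rw [homogeneousComponent_aeval (fun i => isHomogeneous_esymm _),
    ← map_zero (aeval (R := R) _)] at hcomp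
  have := congrArg (coeff t) (aeval_esymm_injective hn hcomp)
  rw [coeff_weightedHomogeneousComponent, if_pos rfl, coeff_zero] at this
  exact mem_support_iff.1 ht this

theorem degreeOf_mul_le_totalDegree_aeval_esymm (hn : n ≤ Fintype.card σ)
    (p : MvPolynomial (Fin n) R) (i : Fin n) :
    p.degreeOf i * (i + 1) ≤ (aeval (fun i : Fin n => esymm σ R (i + 1)) p).totalDegree := by
  rw [← Nat.le_div_iff_mul_le (Nat.add_one_pos _), degreeOf_le_iff]
  intro t ht
  rw [Nat.le_div_iff_mul_le (Nat.add_one_pos _)]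
  refine le_trans ?_ (weight_le_totalDegree_aeval_esymm hn ht)
  rw [weight_eq_sum]
  exact Finset.single_le_sum (f := fun j : Fin n => t j • ((j : ℕ) + 1)) (fun _ _ => zero_le)
    (Finset.mem_univ i)

end Ring

end MvPolynomial

/-- A symmetric polynomial of degree `d ≤ n` can be written as `g(e₁,…,e_d)` where `g` has
degree at most `1` in each of the variables `Z_{⌊d/2⌋+1},…,Z_d`. -/
theorem stmt14 (n d : ℕ) (hdn : d ≤ n) (f : MvPolynomial (Fin n) ℂ)
    (hsym : f.IsSymmetric) (hd : f.totalDegree = d) :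
    ∃ g : MvPolynomial (Fin d) ℂ,
      f = MvPolynomial.aeval (fun j : Fin d => MvPolynomial.esymm (Fin n) ℂ ((j : ℕ) + 1)) g ∧
      ∀ j : Fin d, d / 2 < (j : ℕ) + 1 → g.degreeOf j ≤ 1 := by
  obtain ⟨p, hp⟩ := (esymmAlgHom_fin_bijective ℂ n).2 ⟨f, hsym⟩
  have hf : aeval (fun i : Fin n => esymm (Fin n) ℂ (i + 1)) p = f := by
    rw [← esymmAlgHom_apply, hp]
  have hdeg (i : Fin n) : p.degreeOf i * (i + 1) ≤ d := by
    have := degreeOf_mul_le_totalDegree_aeval_esymm (Fintype.card_fin n).ge p i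
    rwa [hf, hd] at this
  obtain ⟨g, rfl⟩ := exists_rename_castLE_eq hdn p fun i hi => by
    have hi_deg := hdeg i
    by_contra h
    have := Nat.mul_le_mul_right ((i : ℕ) + 1) (Nat.one_le_iff_ne_zero.2 h)
    omega
  refine ⟨g, by rw [← hf, aeval_rename]; rfl, fun j hj => ?_⟩
  have hj' : g.degreeOf j * (j + 1) ≤ d := by
    simpa [degreeOf_rename_of_injective (Fin.castLE_injective hdn)] using hdeg (Fin.castLE hdn j)
  by_contra! h
  have := Nat.mul_le_mul_right ((j : ℕ) + 1) h
  omega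
end

section
/- Let ℍ ⊂ ℂ be a closed half-plane, let G ⊂ Sₙ be a permutation group, and let S(G) = S̃¹_{i₁} × ⋯ × S̃^{κ}_{i_κ} ⊂ G be a Young subgroup of G with κ = κ(G) factors (so i₁ + ⋯ + i_κ = n). Let f ∈ ℂ[X₁,…,Xₙ] be a G-invariant multiaffine polynomial and x ∈ ℍⁿ. Then there exist y₁,…,y_κ ∈ ℍ such that f(x) = f(y₁,…,y₁, y₂,…,y₂, …, y_κ,…,y_κ), where y_j is repeated i_j times in the j-th block. -/
open Finset Polynomial

namespace GWSaux

lemma ms_sq_sum_le (V : Multiset ℝ) : V.sum ^ 2 ≤ V.card * (V.map (fun t => t ^ 2)).sum := by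
  induction V using Multiset.induction_on with
  | empty => simp
  | cons a s ih =>
    simp only [Multiset.sum_cons, Multiset.card_cons, Multiset.map_cons]
    have key : 2 * a * s.sum ≤ s.card * a ^ 2 + (s.map (fun t => t ^ 2)).sum := by
      have h1 : (s.map (fun t => 2 * a * t)).sum ≤ (s.map (fun t => a ^ 2 + t ^ 2)).sum := by
        apply Multiset.sum_map_le_sum_map
        intro t _
        nlinarith [sq_nonneg (a - t)]
      rw [Multiset.sum_map_mul_left] at h1
      have h2 : (s.map (fun t => a ^ 2 + t ^ 2)).sum
          = s.card * a ^ 2 + (s.map (fun t => t ^ 2)).sum := by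
        rw [Multiset.sum_map_add]
        simp [Multiset.map_const', mul_comm]
      simp only [Multiset.map_id'] at h1
      calc 2 * a * s.sum ≤ (s.map (fun t => a ^ 2 + t ^ 2)).sum := h1
        _ = _ := h2
    have hms : s.sum ^ 2 ≤ s.card * (s.map (fun t => t ^ 2)).sum := ih
    push_cast
    nlinarith [hms]

lemma geom (M : ℕ) (hM : 1 ≤ M) (W Z : ℂ) (hW : 0 ≤ W.re) (hZ : 0 ≤ Z.re)
    (V : Multiset ℂ) (hV : ∀ ρ ∈ V, ρ.re < 0) (hcard : V.card ≤ M)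
    (heq : (V.map (fun ρ => (W - Z) * (W - ρ)⁻¹)).sum = (M : ℂ)) : False := by
  classical
  have hMpos : (0:ℝ) < M := by exact_mod_cast hM
  -- V is nonempty
  rcases Multiset.empty_or_exists_mem V with hVe | ⟨ρ₀, hρ₀⟩
  · rw [hVe] at heq
    simp at heq
    have : (M:ℂ) ≠ 0 := by exact_mod_cast (by omega : M ≠ 0)
    exact this heq.symm
  have hVne : V ≠ 0 := by
    intro h; rw [h] at hρ₀; simp at hρ₀
  set r : ℂ → ℂ := fun ρ => (W - ρ)⁻¹ with hr
  have hsub : ∀ ρ ∈ V, 0 < (W - ρ).re ∧ (W - ρ) ≠ 0 := by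
    intro ρ hρ
    have h1 : 0 < (W - ρ).re := by
      have := hV ρ hρ; rw [Complex.sub_re]; linarith
    exact ⟨h1, fun h => by rw [h] at h1; simp at h1⟩
  have hterm : ∀ ρ ∈ V, 0 < (r ρ).re ∧ W.re * Complex.normSq (r ρ) < (r ρ).re := by
    intro ρ hρ
    obtain ⟨h1, hne⟩ := hsub ρ hρ
    have hnsq : 0 < Complex.normSq (W - ρ) := Complex.normSq_pos.2 hne
    have hinv : 0 < (Complex.normSq (W - ρ))⁻¹ := inv_pos.2 hnsq
    constructor
    · rw [hr]; simp only [Complex.inv_re]; positivity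
    · rw [hr]; simp only [Complex.inv_re, Complex.normSq_inv, div_eq_mul_inv]
      have hlt : W.re < (W - ρ).re := by
        have := hV ρ hρ; rw [Complex.sub_re]; linarith
      exact mul_lt_mul_of_pos_right hlt hinv
  set S : ℂ := (V.map r).sum with hS
  have hre : S.re = (V.map (fun ρ => (r ρ).re)).sum := by
    rw [hS, ← Complex.coe_reAddGroupHom, AddMonoidHom.map_multiset_sum, Multiset.map_map]
    rfl
  have hSre : 0 < S.re := by
    rw [hre]
    have : (V.map (fun _ => (0:ℝ))).sum < (V.map (fun ρ => (r ρ).re)).sum := by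
      apply Multiset.sum_lt_sum_of_nonempty
      · exact fun h => hVne (by simpa using h)
      · intro ρ hρ; exact (hterm ρ hρ).1
    simpa using this
  have hSne : S ≠ 0 := by
    intro h; rw [h] at hSre; simp at hSre
  have hnsqS : 0 < Complex.normSq S := Complex.normSq_pos.2 hSne
  -- Cauchy–Schwarz: normSq S ≤ card * Σ normSq (r ρ)
  have hCS : Complex.normSq S ≤ (V.card : ℝ) * (V.map (fun ρ => Complex.normSq (r ρ))).sum := by
    have h1 : ‖S‖ ≤ ((V.map r).map norm).sum := by
      have := norm_multiset_sum_le (V.map r)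
      simpa using this
    have h1' : ‖S‖ ≤ (V.map (fun ρ => ‖r ρ‖)).sum := by
      rwa [Multiset.map_map] at h1
    have h2 := ms_sq_sum_le (V.map (fun ρ => ‖r ρ‖))
    rw [Multiset.card_map, Multiset.map_map] at h2
    have hmapeq : (V.map ((fun t => t ^ 2) ∘ fun ρ => ‖r ρ‖))
        = V.map (fun ρ => Complex.normSq (r ρ)) := by
      apply Multiset.map_congr rfl
      intro ρ _
      simp [Function.comp, Complex.sq_norm]
    have h3 : (V.map (fun ρ => ‖r ρ‖)).sum ^ 2
        ≤ (V.card : ℝ) * (V.map (fun ρ => Complex.normSq (r ρ))).sum := by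
      rw [hmapeq] at h2; exact h2
    have h4 : Complex.normSq S ≤ (V.map (fun ρ => ‖r ρ‖)).sum ^ 2 := by
      rw [← Complex.sq_norm]
      have habs : (0:ℝ) ≤ ‖S‖ := norm_nonneg S
      have hsum : (0:ℝ) ≤ (V.map (fun ρ => ‖r ρ‖)).sum := le_trans habs h1'
      exact pow_le_pow_left₀ habs h1' 2
    exact le_trans h4 h3
  -- strict bound
  have hstrict : W.re * Complex.normSq S < (M:ℝ) * S.re := by
    have h5 : W.re * Complex.normSq S
        ≤ (V.card : ℝ) * (V.map (fun ρ => W.re * Complex.normSq (r ρ))).sum := by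
      calc W.re * Complex.normSq S
          ≤ W.re * ((V.card : ℝ) * (V.map (fun ρ => Complex.normSq (r ρ))).sum) :=
            mul_le_mul_of_nonneg_left hCS hW
        _ = (V.card : ℝ) * (W.re * (V.map (fun ρ => Complex.normSq (r ρ))).sum) := by ring
        _ = (V.card : ℝ) * (V.map (fun ρ => W.re * Complex.normSq (r ρ))).sum := by
            rw [Multiset.sum_map_mul_left]
    have h6 : (V.map (fun ρ => W.re * Complex.normSq (r ρ))).sum
        < (V.map (fun ρ => (r ρ).re)).sum := by
      apply Multiset.sum_lt_sum_of_nonempty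
      · exact fun h => hVne (by simpa using h)
      · intro ρ hρ; exact (hterm ρ hρ).2
    have hcard' : (V.card : ℝ) ≤ (M : ℝ) := by exact_mod_cast hcard
    have hcardpos : (0:ℝ) < V.card := by
      have : 0 < V.card := Multiset.card_pos.2 hVne
      exact_mod_cast this
    calc W.re * Complex.normSq S
        ≤ (V.card : ℝ) * (V.map (fun ρ => W.re * Complex.normSq (r ρ))).sum := h5
      _ < (V.card : ℝ) * (V.map (fun ρ => (r ρ).re)).sum :=
          mul_lt_mul_of_pos_left h6 hcardpos
      _ = (V.card : ℝ) * S.re := by rw [hre]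
      _ ≤ (M:ℝ) * S.re := mul_le_mul_of_nonneg_right hcard' (le_of_lt hSre)
  -- the equation
  have heq2 : (W - Z) * S = (M : ℂ) := by
    rw [hS, ← Multiset.sum_map_mul_left]
    exact heq
  have hWZ : W - Z = (M : ℂ) / S := by
    field_simp at heq2 ⊢
    linear_combination heq2
  have hre2 : (W - Z).re = (M : ℝ) * S.re / Complex.normSq S := by
    rw [hWZ, Complex.div_re]
    simp [Complex.natCast_re, Complex.natCast_im]
  have hlt : W.re < (W - Z).re := by
    rw [hre2]
    rw [lt_div_iff₀ hnsqS]
    calc W.re * Complex.normSq S < (M:ℝ) * S.re := hstrict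
      _ = _ := by ring
  rw [Complex.sub_re] at hlt
  linarith

lemma laguerre (α β : ℂ) (hα : α ≠ 0) (M : ℕ) (hM : 1 ≤ M) (P : Polynomial ℂ)
    (hdeg : P.natDegree ≤ M)
    (hP : ∀ y : ℂ, 0 ≤ (α * y + β).re → P.eval y ≠ 0)
    (ζ w : ℂ) (hζ : 0 ≤ (α * ζ + β).re) (hw : 0 ≤ (α * w + β).re) :
    (M : ℂ) * P.eval w + (ζ - w) * (Polynomial.derivative P).eval w ≠ 0 := by
  classical
  intro h
  have hPw : P.eval w ≠ 0 := hP w hw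
  have hP0 : P ≠ 0 := fun h0 => hPw (by simp [h0])
  have hMne : (M : ℂ) ≠ 0 := by exact_mod_cast (by omega : M ≠ 0)
  have hcardroots : Multiset.card P.roots = P.natDegree :=
    (Polynomial.splits_iff_card_roots).1 (IsAlgClosed.splits P)
  have hfact : Polynomial.C P.leadingCoeff * (P.roots.map (fun r => X - C r)).prod = P :=
    Polynomial.C_leadingCoeff_mul_prod_multiset_X_sub_C hcardroots
  have hlc : P.leadingCoeff ≠ 0 := Polynomial.leadingCoeff_ne_zero.2 hP0
  have hroots_re : ∀ r ∈ P.roots, (α * r + β).re < 0 := by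
    intro r hr
    by_contra hc
    push_neg at hc
    exact hP r hc (Polynomial.isRoot_of_mem_roots hr)
  have hwr : ∀ r ∈ P.roots, w - r ≠ 0 := by
    intro r hr h0
    have : w = r := by linear_combination h0
    exact hPw (this ▸ Polynomial.isRoot_of_mem_roots hr)
  -- evaluations
  have hevalP : P.eval w
      = P.leadingCoeff * (P.roots.map (fun r => w - r)).prod := by
    conv_lhs => rw [← hfact]
    rw [Polynomial.eval_mul, Polynomial.eval_C]
    congr 1
    rw [← Polynomial.coe_evalRingHom, map_multiset_prod, Multiset.map_map]
    congr 1
    apply Multiset.map_congr rfl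
    intro r _
    simp
  have hevalD : (Polynomial.derivative P).eval w
      = P.leadingCoeff *
        (P.roots.map (fun r => ((P.roots.erase r).map (fun r' => w - r')).prod)).sum := by
    conv_lhs => rw [← hfact]
    rw [Polynomial.derivative_C_mul, Polynomial.eval_mul, Polynomial.eval_C]
    congr 1
    rw [Polynomial.derivative_prod]
    rw [← Polynomial.coe_evalRingHom, map_multiset_sum, Multiset.map_map]
    congr 1
    apply Multiset.map_congr rfl
    intro r hr
    simp only [Function.comp_apply, Polynomial.derivative_sub, Polynomial.derivative_X,
      Polynomial.derivative_C, sub_zero, mul_one, Polynomial.eval_mul, Polynomial.eval_one]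
    rw [map_multiset_prod, Multiset.map_map]
    simp only [Polynomial.coe_evalRingHom]
    rw [show ((fun p => Polynomial.eval w p) ∘ fun r' => X - C r') = fun r' => w - r' by
      funext r'; simp]
  set Pr : ℂ := (P.roots.map (fun r => w - r)).prod with hPr
  have hPrne : Pr ≠ 0 := by
    rw [hPr]
    apply Multiset.prod_ne_zero
    intro h0
    obtain ⟨r, hr, hr0⟩ := Multiset.mem_map.1 h0
    exact hwr r hr hr0
  -- scalar equation
  have heq1 : (M : ℂ) * Pr = (w - ζ) *
      (P.roots.map (fun r => ((P.roots.erase r).map (fun r' => w - r')).prod)).sum := by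
    have h' : (M : ℂ) * P.eval w = (w - ζ) * (Polynomial.derivative P).eval w := by
      linear_combination h
    rw [hevalP, hevalD] at h'
    have h'' : P.leadingCoeff * ((M : ℂ) * Pr) = P.leadingCoeff *
        ((w - ζ) * (P.roots.map (fun r => ((P.roots.erase r).map (fun r' => w - r')).prod)).sum) := by
      linear_combination h'
    exact mul_left_cancel₀ hlc h''
  have hwζ : w ≠ ζ := by
    intro hweq
    rw [← hweq] at h
    simp at h
    rcases h with h | h
    · exact hMne (by exact_mod_cast h)
    · exact hPw h
  -- divide by Pr
  have heq2 : (P.roots.map (fun r => (w - ζ) * (w - r)⁻¹)).sum = (M : ℂ) := by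
    have key : (P.roots.map (fun r => (w - ζ) * (w - r)⁻¹)).sum * Pr = (M : ℂ) * Pr := by
      rw [← Multiset.sum_map_mul_right]
      have : (P.roots.map (fun r => (w - ζ) * (w - r)⁻¹ * Pr)).sum
          = (P.roots.map (fun r => (w - ζ) * ((P.roots.erase r).map (fun r' => w - r')).prod)).sum := by
        apply congrArg Multiset.sum
        apply Multiset.map_congr rfl
        intro r hr
        have hPrr : (w - r) * ((P.roots.erase r).map (fun r' => w - r')).prod = Pr := by
          rw [hPr]
          exact Multiset.prod_map_erase (f := fun r' => w - r') hr
        rw [← hPrr, mul_assoc, inv_mul_cancel_left₀ (hwr r hr)]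
      rw [this, Multiset.sum_map_mul_left, ← heq1]
    exact mul_right_cancel₀ hPrne key
  -- transform to the right half plane and apply geom
  set W := α * w + β with hW
  set Z := α * ζ + β with hZ'
  have heq3 : ((P.roots.map (fun r => α * r + β)).map (fun ρ => (W - Z) * (W - ρ)⁻¹)).sum
      = (M : ℂ) := by
    rw [Multiset.map_map, ← heq2]
    apply congrArg Multiset.sum
    apply Multiset.map_congr rfl
    intro r hr
    simp only [Function.comp_apply]
    have h1 : W - (α * r + β) = α * (w - r) := by rw [hW]; ring
    have h2 : W - Z = α * (w - ζ) := by rw [hW, hZ']; ring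
    rw [h1, h2, mul_inv]
    field_simp [hwr r hr]
  exact geom M hM W Z hw hζ (P.roots.map (fun r => α * r + β))
    (by intro ρ hρ
        obtain ⟨r, hr, rfl⟩ := Multiset.mem_map.1 hρ
        exact hroots_re r hr)
    (by rw [Multiset.card_map, hcardroots]; exact hdeg)
    heq3

noncomputable def esum {ι : Type*} [DecidableEq ι] (T : Finset ι) (k : ℕ) (z : ι → ℂ) : ℂ :=
  ∑ A ∈ T.powersetCard k, ∏ i ∈ A, z i

lemma esum_zero {ι : Type*} [DecidableEq ι] (T : Finset ι) (z : ι → ℂ) : esum T 0 z = 1 := by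
  simp [esum]

lemma esum_top {ι : Type*} [DecidableEq ι] (s : Finset ι) (z : ι → ℂ) :
    esum s (s.card + 1) z = 0 := by
  simp [esum, Finset.powersetCard_eq_empty.2 (Nat.lt_succ_self _)]

lemma esum_insert {ι : Type*} [DecidableEq ι] {a : ι} {s : Finset ι} (ha : a ∉ s) (k : ℕ)
    (z : ι → ℂ) : esum (insert a s) (k + 1) z = esum s (k + 1) z + z a * esum s k z := by
  simp only [esum]
  rw [Finset.powersetCard_succ_insert ha]
  rw [Finset.sum_union]
  · congr 1
    rw [Finset.sum_image]
    · rw [Finset.mul_sum]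
      apply Finset.sum_congr rfl
      intro A hA
      have haA : a ∉ A := fun h => ha ((Finset.mem_powersetCard.1 hA).1 h)
      rw [Finset.prod_insert haA]
    · intro A hA A' hA' h
      have haA : a ∉ A := fun h => ha ((Finset.mem_powersetCard.1 hA).1 h)
      have haA' : a ∉ A' := fun h => ha ((Finset.mem_powersetCard.1 hA').1 h)
      rw [← Finset.erase_insert haA, ← Finset.erase_insert haA', h]
  · rw [Finset.disjoint_right]
    intro A hA hA'
    obtain ⟨B, hB, rfl⟩ := Finset.mem_image.1 hA
    exact ha ((Finset.mem_powersetCard.1 hA').1 (Finset.mem_insert_self a B))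

lemma polar_identity (m : ℕ) (c : ℕ → ℂ) (ζ y : ℂ) :
    ((m:ℂ)+1) * (∑ k ∈ range (m+2), c k * ((m+1).choose k : ℂ) * y ^ k)
    + (ζ - y) * (∑ k ∈ range (m+1), c (k+1) * (((m+1).choose (k+1) : ℂ) * ((k:ℂ)+1)) * y ^ k)
    = ((m:ℂ)+1) * ∑ k ∈ range (m+1), (c k + ζ * c (k+1)) * (m.choose k : ℂ) * y ^ k := by
  have hid1 : ∀ k : ℕ, ((m+1).choose (k+1) : ℂ) * ((k:ℂ)+1) = ((m:ℂ)+1) * (m.choose k : ℂ) := by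
    intro k
    have h : ((m+1).choose (k+1) * (k+1) : ℕ) = ((m+1) * m.choose k : ℕ) := by
      simpa [Nat.succ_eq_add_one] using (Nat.add_one_mul_choose_eq m k).symm
    calc ((m+1).choose (k+1) : ℂ) * ((k:ℂ)+1)
        = (((m+1).choose (k+1) * (k+1) : ℕ) : ℂ) := by push_cast; ring
      _ = (((m+1) * m.choose k : ℕ) : ℂ) := by rw [h]
      _ = ((m:ℂ)+1) * (m.choose k : ℂ) := by push_cast; ring
  have hid2 : ∀ k : ℕ, k ≤ m + 1 → ((m:ℂ)+1) * ((m+1).choose k : ℂ)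
      = ((m:ℂ)+1) * (m.choose k : ℂ) + (k:ℂ) * ((m+1).choose k : ℂ) := by
    intro k hk
    have h := Nat.choose_mul_succ_eq m k
    have h2 : ((m.choose k * (m+1) : ℕ) : ℂ) = (((m+1).choose k * (m + 1 - k) : ℕ) : ℂ) := by
      rw [h]
    rw [Nat.cast_mul, Nat.cast_mul, Nat.cast_sub hk] at h2
    push_cast at h2
    linear_combination (-1 : ℂ) * h2
  set Dsum := ∑ k ∈ range (m+1), c (k+1) * (m.choose k : ℂ) * y ^ k with hD
  have step1 : (∑ k ∈ range (m+1), c (k+1) * (((m+1).choose (k+1) : ℂ) * ((k:ℂ)+1)) * y ^ k)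
      = ((m:ℂ)+1) * Dsum := by
    rw [hD, mul_sum]
    apply sum_congr rfl
    intro k _
    rw [hid1 k]
    ring
  have stepA : ((m:ℂ)+1) * (∑ k ∈ range (m+2), c k * ((m+1).choose k : ℂ) * y ^ k)
      = (((m:ℂ)+1) * ∑ k ∈ range (m+1), c k * (m.choose k : ℂ) * y ^ k)
        + y * (((m:ℂ)+1) * Dsum) := by
    rw [mul_sum]
    have hsplit : ∀ k ∈ range (m+2), ((m:ℂ)+1) * (c k * ((m+1).choose k : ℂ) * y ^ k)
        = c k * (((m:ℂ)+1) * (m.choose k : ℂ)) * y ^ k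
          + c k * ((k:ℂ) * ((m+1).choose k : ℂ)) * y ^ k := by
      intro k hk
      have hk' : k ≤ m + 1 := Nat.lt_succ_iff.1 (mem_range.1 hk)
      linear_combination (c k * y ^ k) * hid2 k hk'
    rw [sum_congr rfl hsplit, sum_add_distrib]
    congr 1
    · rw [sum_range_succ]
      have hz : c (m+1) * (((m:ℂ)+1) * ((m.choose (m+1) : ℕ) : ℂ)) * y ^ (m+1) = 0 := by
        rw [Nat.choose_eq_zero_of_lt (Nat.lt_succ_self m)]
        simp
      rw [hz, add_zero, mul_sum]
      apply sum_congr rfl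
      intro k _
      ring
    · rw [sum_range_succ']
      have hz0 : c 0 * (((0:ℕ):ℂ) * ((m+1).choose 0 : ℂ)) * y ^ 0 = 0 := by simp
      rw [hz0, add_zero, hD, mul_sum, mul_sum]
      apply sum_congr rfl
      intro k _
      have := hid1 k
      push_cast
      push_cast at this
      linear_combination (c (k+1) * y ^ (k+1)) * this
  have stepR : ((m:ℂ)+1) * (∑ k ∈ range (m+1), (c k + ζ * c (k+1)) * (m.choose k : ℂ) * y ^ k)
      = (((m:ℂ)+1) * ∑ k ∈ range (m+1), c k * (m.choose k : ℂ) * y ^ k)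
        + ζ * (((m:ℂ)+1) * Dsum) := by
    rw [hD, mul_sum, mul_sum, mul_sum, mul_sum, ← sum_add_distrib]
    apply sum_congr rfl
    intro k _
    ring
  rw [step1, stepA, stepR]
  ring

lemma core {ι : Type*} [DecidableEq ι] (α β : ℂ) (hα : α ≠ 0) (z : ι → ℂ) (T : Finset ι) :
    ∀ c : ℕ → ℂ,
    (∀ y : ℂ, 0 ≤ (α * y + β).re →
      (∑ k ∈ Finset.range (T.card + 1), c k * (T.card.choose k : ℂ) * y ^ k) ≠ 0) →
    (∀ i ∈ T, 0 ≤ (α * z i + β).re) →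
    (∑ k ∈ Finset.range (T.card + 1), c k * esum T k z) ≠ 0 := by
  induction T using Finset.induction_on with
  | empty =>
    intro c hroot _
    have hmem : 0 ≤ (α * ((1 - β) / α) + β).re := by
      have : α * ((1 - β) / α) + β = 1 := by field_simp; ring
      rw [this]
      norm_num
    have h := hroot _ hmem
    simp only [Finset.card_empty] at h ⊢
    rw [Finset.sum_range_one] at h ⊢
    rw [esum_zero]
    simpa using h
  | @insert a s ha ih =>
    intro c hroot hz
    set m := s.card with hm
    have hcardT : (insert a s).card = m + 1 := Finset.card_insert_of_notMem ha
    rw [hcardT] at hroot ⊢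
    set ζ := z a with hζdef
    have hζ : 0 ≤ (α * ζ + β).re := hz a (Finset.mem_insert_self a s)
    -- the polynomial P
    set P : Polynomial ℂ := ∑ k ∈ range (m+2), Polynomial.C (c k * ((m+1).choose k : ℂ)) * X ^ k
      with hP
    have hevalP : ∀ y : ℂ, P.eval y = ∑ k ∈ range (m+2), c k * ((m+1).choose k : ℂ) * y ^ k := by
      intro y
      rw [hP, Polynomial.eval_finset_sum]
      exact Finset.sum_congr rfl (fun k _ => by simp)
    have hdegP : P.natDegree ≤ m + 1 := by
      rw [hP]
      apply Polynomial.natDegree_sum_le_of_forall_le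
      intro k hk
      exact le_trans (Polynomial.natDegree_C_mul_X_pow_le _ _) (Nat.lt_succ_iff.1 (mem_range.1 hk))
    have hevalD : ∀ y : ℂ, (Polynomial.derivative P).eval y
        = ∑ k ∈ range (m+1), c (k+1) * (((m+1).choose (k+1) : ℂ) * ((k:ℂ)+1)) * y ^ k := by
      intro y
      rw [hP, map_sum, Polynomial.eval_finset_sum]
      have : ∀ k ∈ range (m+2),
          (Polynomial.derivative (Polynomial.C (c k * ((m+1).choose k : ℂ)) * X ^ k)).eval y
          = c k * ((m+1).choose k : ℂ) * (k : ℂ) * y ^ (k-1) := by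
        intro k _
        rw [Polynomial.derivative_C_mul_X_pow]
        simp
      rw [Finset.sum_congr rfl this, Finset.sum_range_succ']
      have h0 : c 0 * (((m+1).choose 0 : ℕ) : ℂ) * ((0:ℕ) : ℂ) * y ^ (0-1) = 0 := by simp
      rw [h0, add_zero]
      apply Finset.sum_congr rfl
      intro k _
      push_cast
      ring_nf
    have hrootP : ∀ y : ℂ, 0 ≤ (α * y + β).re → P.eval y ≠ 0 := by
      intro y hy
      rw [hevalP]
      exact hroot y hy
    -- new coefficients
    set c' : ℕ → ℂ := fun k => c k + ζ * c (k+1) with hc'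
    have hroot' : ∀ y : ℂ, 0 ≤ (α * y + β).re →
        (∑ k ∈ range (m+1), c' k * (m.choose k : ℂ) * y ^ k) ≠ 0 := by
      intro y hy heq0
      apply laguerre α β hα (m+1) (Nat.le_add_left 1 m) P hdegP hrootP ζ y hζ hy
      rw [hevalP, hevalD]
      push_cast
      rw [polar_identity m c ζ y]
      rw [hc'] at heq0
      simp only [heq0, mul_zero]
    have hz' : ∀ i ∈ s, 0 ≤ (α * z i + β).re := fun i hi => hz i (Finset.mem_insert_of_mem hi)
    have hS := ih c' hroot' hz'
    -- rewrite the goal sum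
    have hfinal : (∑ k ∈ range (m+2), c k * esum (insert a s) k z)
        = ∑ k ∈ range (m+1), c' k * esum s k z := by
      rw [Finset.sum_range_succ']
      have h1 : ∀ k ∈ range (m+1), c (k+1) * esum (insert a s) (k+1) z
          = c (k+1) * esum s (k+1) z + ζ * (c (k+1) * esum s k z) := by
        intro k _
        rw [esum_insert ha, hζdef]
        ring
      rw [Finset.sum_congr rfl h1, Finset.sum_add_distrib]
      have h2 : (∑ k ∈ range (m+1), c (k+1) * esum s (k+1) z)
          = ∑ k ∈ range m, c (k+1) * esum s (k+1) z := by
        rw [Finset.sum_range_succ, hm, esum_top, mul_zero, add_zero]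
      have h3 : (∑ k ∈ range (m+1), ζ * (c (k+1) * esum s k z))
          = ζ * ∑ k ∈ range (m+1), c (k+1) * esum s k z := by
        rw [Finset.mul_sum]
      have h4 : c 0 * esum (insert a s) 0 z = c 0 := by rw [esum_zero, mul_one]
      rw [h2, h3, h4]
      -- RHS
      have h5 : (∑ k ∈ range (m+1), c' k * esum s k z)
          = (∑ k ∈ range (m+1), c k * esum s k z)
            + ζ * ∑ k ∈ range (m+1), c (k+1) * esum s k z := by
        rw [hc', Finset.mul_sum, ← Finset.sum_add_distrib]
        apply Finset.sum_congr rfl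
        intro k _
        ring
      rw [h5]
      have h6 : (∑ k ∈ range (m+1), c k * esum s k z)
          = c 0 + ∑ k ∈ range m, c (k+1) * esum s (k+1) z := by
        rw [Finset.sum_range_succ']
        rw [esum_zero, mul_one, add_comm]
      rw [h6]
      ring
    rw [hfinal]
    exact hS

lemma exists_diag {ι : Type*} [DecidableEq ι] (α β : ℂ) (hα : α ≠ 0) (z : ι → ℂ) (T : Finset ι)
    (c : ℕ → ℂ) (hz : ∀ i ∈ T, 0 ≤ (α * z i + β).re) :
    ∃ y : ℂ, 0 ≤ (α * y + β).re ∧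
      (∑ k ∈ Finset.range (T.card + 1), c k * (T.card.choose k : ℂ) * y ^ k) =
      (∑ k ∈ Finset.range (T.card + 1), c k * esum T k z) := by
  by_contra hcon
  push_neg at hcon
  set V := ∑ k ∈ Finset.range (T.card + 1), c k * esum T k z with hV
  set c' : ℕ → ℂ := fun k => if k = 0 then c 0 - V else c k with hc'
  have hsum1 : ∀ y : ℂ, (∑ k ∈ Finset.range (T.card + 1), c' k * (T.card.choose k : ℂ) * y ^ k)
      = (∑ k ∈ Finset.range (T.card + 1), c k * (T.card.choose k : ℂ) * y ^ k) - V := by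
    intro y
    rw [Finset.sum_range_succ', Finset.sum_range_succ']
    simp only [hc', if_pos rfl, Nat.succ_ne_zero, if_false]
    simp [Nat.choose_zero_right]
    ring
  have hsum2 : (∑ k ∈ Finset.range (T.card + 1), c' k * esum T k z)
      = (∑ k ∈ Finset.range (T.card + 1), c k * esum T k z) - V := by
    rw [Finset.sum_range_succ', Finset.sum_range_succ']
    simp only [hc', if_pos rfl, Nat.succ_ne_zero, if_false]
    rw [esum_zero]
    ring
  have hroot' : ∀ y : ℂ, 0 ≤ (α * y + β).re →
      (∑ k ∈ Finset.range (T.card + 1), c' k * (T.card.choose k : ℂ) * y ^ k) ≠ 0 := by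
    intro y hy
    rw [hsum1]
    intro h0
    exact (hcon y hy) (by linear_combination h0)
  have := core α β hα z T c' hroot' hz
  rw [hsum2] at this
  exact this (sub_eq_zero.2 hV.symm)

lemma exists_perm {n : ℕ} (T A A' : Finset (Fin n)) (hA : A ⊆ T) (hA' : A' ⊆ T)
    (hc : A.card = A'.card) :
    ∃ σ : Equiv.Perm (Fin n), (∀ i ∉ T, σ i = i) ∧ (∀ i, i ∈ A ↔ σ i ∈ A') ∧
      (∀ i, i ∈ T ↔ σ i ∈ T) := by
  classical
  have hc2 : (T \ A).card = (T \ A').card := by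
    rw [Finset.card_sdiff_of_subset hA, Finset.card_sdiff_of_subset hA', hc]
  set e1 := Finset.equivOfCardEq hc with he1
  set e2 := Finset.equivOfCardEq hc2 with he2
  set g : Fin n → Fin n := fun i =>
    if h : i ∈ A then (e1 ⟨i, h⟩ : Fin n)
    else if h2 : i ∈ T \ A then (e2 ⟨i, h2⟩ : Fin n) else i with hg
  set g' : Fin n → Fin n := fun i =>
    if h : i ∈ A' then (e1.symm ⟨i, h⟩ : Fin n)
    else if h2 : i ∈ T \ A' then (e2.symm ⟨i, h2⟩ : Fin n) else i with hg'
  have hgA : ∀ (i : Fin n) (h : i ∈ A), g i = (e1 ⟨i, h⟩ : Fin n) := by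
    intro i h; rw [hg]; exact dif_pos h
  have hgTA : ∀ (i : Fin n) (h2 : i ∈ T \ A), g i = (e2 ⟨i, h2⟩ : Fin n) := by
    intro i h2
    have h : i ∉ A := (Finset.mem_sdiff.1 h2).2
    rw [hg]; simp only [dif_neg h]; exact dif_pos h2
  have hgid : ∀ i ∉ T, g i = i := by
    intro i hiT
    have h : i ∉ A := fun hh => hiT (hA hh)
    have h2 : i ∉ T \ A := fun hh => hiT (Finset.mem_sdiff.1 hh).1
    rw [hg]; simp only [dif_neg h, dif_neg h2]
  have hg'A : ∀ (i : Fin n) (h : i ∈ A'), g' i = (e1.symm ⟨i, h⟩ : Fin n) := by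
    intro i h; rw [hg']; exact dif_pos h
  have hg'TA : ∀ (i : Fin n) (h2 : i ∈ T \ A'), g' i = (e2.symm ⟨i, h2⟩ : Fin n) := by
    intro i h2
    have h : i ∉ A' := (Finset.mem_sdiff.1 h2).2
    rw [hg']; simp only [dif_neg h]; exact dif_pos h2
  have hg'id : ∀ i ∉ T, g' i = i := by
    intro i hiT
    have h : i ∉ A' := fun hh => hiT (hA' hh)
    have h2 : i ∉ T \ A' := fun hh => hiT (Finset.mem_sdiff.1 hh).1
    rw [hg']; simp only [dif_neg h, dif_neg h2]
  have hleft : ∀ i, g' (g i) = i := by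
    intro i
    by_cases h : i ∈ A
    · rw [hgA i h]
      have hmem : (e1 ⟨i, h⟩ : Fin n) ∈ A' := (e1 ⟨i, h⟩).2
      rw [hg'A _ hmem, Subtype.coe_eta, Equiv.symm_apply_apply]
    · by_cases h2 : i ∈ T \ A
      · rw [hgTA i h2]
        have hmem : (e2 ⟨i, h2⟩ : Fin n) ∈ T \ A' := (e2 ⟨i, h2⟩).2
        rw [hg'TA _ hmem, Subtype.coe_eta, Equiv.symm_apply_apply]
      · have hiT : i ∉ T := fun hh => h2 (Finset.mem_sdiff.2 ⟨hh, h⟩)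
        rw [hgid i hiT, hg'id i hiT]
  have hright : ∀ i, g (g' i) = i := by
    intro i
    by_cases h : i ∈ A'
    · rw [hg'A i h]
      have hmem : (e1.symm ⟨i, h⟩ : Fin n) ∈ A := (e1.symm ⟨i, h⟩).2
      rw [hgA _ hmem, Subtype.coe_eta, Equiv.apply_symm_apply]
    · by_cases h2 : i ∈ T \ A'
      · rw [hg'TA i h2]
        have hmem : (e2.symm ⟨i, h2⟩ : Fin n) ∈ T \ A := (e2.symm ⟨i, h2⟩).2
        rw [hgTA _ hmem, Subtype.coe_eta, Equiv.apply_symm_apply]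
      · have hiT : i ∉ T := fun hh => h2 (Finset.mem_sdiff.2 ⟨hh, h⟩)
        rw [hg'id i hiT, hgid i hiT]
  refine ⟨⟨g, g', hleft, hright⟩, hgid, ?_, ?_⟩
  · intro i
    constructor
    · intro h
      show g i ∈ A'
      rw [hgA i h]
      exact (e1 ⟨i, h⟩).2
    · intro h
      replace h : g i ∈ A' := h
      by_contra hiA
      by_cases h2 : i ∈ T \ A
      · have : g i ∈ T \ A' := by rw [hgTA i h2]; exact (e2 ⟨i, h2⟩).2
        exact (Finset.mem_sdiff.1 this).2 h
      · have hiT : i ∉ T := fun hh => h2 (Finset.mem_sdiff.2 ⟨hh, hiA⟩)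
        have : g i = i := hgid i hiT
        rw [this] at h
        exact hiT (hA' h)
  · intro i
    constructor
    · intro h
      show g i ∈ T
      by_cases hh : i ∈ A
      · rw [hgA i hh]; exact hA' (e1 ⟨i, hh⟩).2
      · have h2 : i ∈ T \ A := Finset.mem_sdiff.2 ⟨h, hh⟩
        rw [hgTA i h2]
        exact (Finset.mem_sdiff.1 (e2 ⟨i, h2⟩).2).1
    · intro h
      replace h : g i ∈ T := h
      by_contra hiT
      have : g i = i := hgid i hiT
      rw [this] at h
      exact hiT h

lemma block {n : ℕ} (α β : ℂ) (hα : α ≠ 0) (f : MvPolynomial (Fin n) ℂ)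
    (hmaff : ∀ i, f.degreeOf i ≤ 1) (T : Finset (Fin n))
    (hsym : ∀ σ : Equiv.Perm (Fin n), (∀ i ∉ T, σ i = i) → MvPolynomial.rename (⇑σ) f = f)
    (z : Fin n → ℂ) (hz : ∀ i, 0 ≤ (α * z i + β).re) :
    ∃ y : ℂ, 0 ≤ (α * y + β).re ∧
      MvPolynomial.eval z f = MvPolynomial.eval (fun i => if i ∈ T then y else z i) f := by
  classical
  have hexp1 : ∀ d ∈ f.support, ∀ i ∈ d.support, d i = 1 := by
    intro d hd i hi
    have h1 : d i ≤ f.degreeOf i := by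
      rw [MvPolynomial.degreeOf_eq_sup]
      exact Finset.le_sup (f := fun m => m i) hd
    have h2 := hmaff i
    have h0 : d i ≠ 0 := Finsupp.mem_support_iff.1 hi
    omega
  have heval : ∀ w : Fin n → ℂ, MvPolynomial.eval w f
      = ∑ d ∈ f.support, f.coeff d * ∏ i ∈ d.support, w i := by
    intro w
    rw [MvPolynomial.eval_eq]
    apply Finset.sum_congr rfl
    intro d hd
    congr 1
    apply Finset.prod_congr rfl
    intro i hi
    rw [hexp1 d hd i hi, pow_one]
  set a : Finset (Fin n) → ℂ := fun A =>
    ∑ d ∈ f.support.filter (fun d => d.support ∩ T = A), f.coeff d * ∏ i ∈ d.support \ T, z i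
    with ha
  have hsplit : ∀ w : Fin n → ℂ, (∀ i ∉ T, w i = z i) →
      MvPolynomial.eval w f = ∑ A ∈ T.powerset, a A * ∏ i ∈ A, w i := by
    intro w hw
    rw [heval w]
    rw [← Finset.sum_fiberwise_of_maps_to (g := fun d : (Fin n) →₀ ℕ => d.support ∩ T)
      (fun d _ => Finset.mem_powerset.2 Finset.inter_subset_right)]
    apply Finset.sum_congr rfl
    intro A hA
    rw [ha]
    simp only
    rw [Finset.sum_mul]
    apply Finset.sum_congr rfl
    intro d hd
    obtain ⟨hdsupp, hdA⟩ := Finset.mem_filter.1 hd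
    have hprod : (∏ i ∈ d.support, w i)
        = (∏ i ∈ d.support ∩ T, w i) * ∏ i ∈ d.support \ T, w i := by
      rw [← Finset.prod_filter_mul_prod_filter_not d.support (· ∈ T) w,
        Finset.filter_mem_eq_inter, ← Finset.sdiff_eq_filter]
    have hzz : (∏ i ∈ d.support \ T, w i) = ∏ i ∈ d.support \ T, z i := by
      apply Finset.prod_congr rfl
      intro i hi
      exact hw i (Finset.mem_sdiff.1 hi).2
    rw [hprod, hzz, hdA]
    ring
  -- general transport along a suitable permutation
  have htrans : ∀ (τ : Equiv.Perm (Fin n)) (Ab Bb : Finset (Fin n)), Bb ⊆ T →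
      (∀ i ∉ T, τ i = i) → (∀ i, i ∈ Ab ↔ τ i ∈ Bb) → (∀ i, i ∈ T ↔ τ i ∈ T) →
      ∀ d ∈ f.support.filter (fun d => d.support ∩ T = Ab),
        Finsupp.mapDomain (⇑τ) d ∈ f.support.filter (fun d => d.support ∩ T = Bb) ∧
        f.coeff (Finsupp.mapDomain (⇑τ) d) = f.coeff d ∧
        (Finsupp.mapDomain (⇑τ) d).support \ T = d.support \ T := by
    intro τ Ab Bb hBbT hfix hABiff hTiff d hd
    obtain ⟨hds, hdA⟩ := Finset.mem_filter.1 hd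
    have hren : MvPolynomial.rename (⇑τ) f = f := hsym τ hfix
    have hcoeff : f.coeff (Finsupp.mapDomain (⇑τ) d) = f.coeff d := by
      conv_lhs => rw [← hren]
      exact MvPolynomial.coeff_rename_mapDomain (⇑τ) τ.injective f d
    have hsupp : (Finsupp.mapDomain (⇑τ) d).support = d.support.image (⇑τ) :=
      Finsupp.mapDomain_support_of_injective τ.injective d
    have hinter : (d.support.image (⇑τ)) ∩ T = Bb := by
      ext j
      simp only [Finset.mem_inter, Finset.mem_image]
      constructor
      · rintro ⟨⟨i, hi, rfl⟩, hjT⟩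
        have hiT : i ∈ T := (hTiff i).2 hjT
        have hiA : i ∈ Ab := by
          rw [← hdA]; exact Finset.mem_inter.2 ⟨hi, hiT⟩
        exact (hABiff i).1 hiA
      · intro hj
        have hiA : τ.symm j ∈ Ab := by
          rw [hABiff (τ.symm j), Equiv.apply_symm_apply]; exact hj
        have hmem : τ.symm j ∈ d.support ∩ T := by rw [hdA]; exact hiA
        exact ⟨⟨τ.symm j, (Finset.mem_inter.1 hmem).1, Equiv.apply_symm_apply τ j⟩, hBbT hj⟩
    have hsd : (d.support.image (⇑τ)) \ T = d.support \ T := by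
      ext j
      simp only [Finset.mem_sdiff, Finset.mem_image]
      constructor
      · rintro ⟨⟨i, hi, rfl⟩, hjT⟩
        have hiT : i ∉ T := fun hh => hjT ((hTiff i).1 hh)
        rw [hfix i hiT]
        exact ⟨hi, hiT⟩
      · rintro ⟨hj, hjT⟩
        exact ⟨⟨j, hj, hfix j hjT⟩, hjT⟩
    refine ⟨Finset.mem_filter.2 ⟨?_, ?_⟩, hcoeff, by rw [hsupp]; exact hsd⟩
    · rw [MvPolynomial.mem_support_iff, hcoeff]
      exact MvPolynomial.mem_support_iff.1 hds
    · rw [hsupp]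
      exact hinter
  -- symmetry of coefficients
  have hinv1 : ∀ d : (Fin n) →₀ ℕ, ∀ σ : Equiv.Perm (Fin n),
      Finsupp.mapDomain (⇑σ.symm) (Finsupp.mapDomain (⇑σ) d) = d := by
    intro d σ
    rw [← Finsupp.mapDomain_comp, Equiv.symm_comp_self, Finsupp.mapDomain_id]
  have hkey : ∀ A A' : Finset (Fin n), A ⊆ T → A' ⊆ T → A.card = A'.card → a A = a A' := by
    intro A A' hAT hA'T hcc
    obtain ⟨σ, hfix, hAiff, hTiff⟩ := exists_perm T A A' hAT hA'T hcc
    have hfix' : ∀ i ∉ T, σ.symm i = i := by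
      intro i hi
      conv_lhs => rw [← hfix i hi]
      rw [Equiv.symm_apply_apply]
    have hTiff' : ∀ i, i ∈ T ↔ σ.symm i ∈ T := by
      intro i
      have h := hTiff (σ.symm i)
      rw [Equiv.apply_symm_apply] at h
      exact h.symm
    have hAiff' : ∀ i, i ∈ A' ↔ σ.symm i ∈ A := by
      intro i
      have h := hAiff (σ.symm i)
      rw [Equiv.apply_symm_apply] at h
      exact h.symm
    have hσ := htrans σ A A' hA'T hfix hAiff hTiff
    have hσ' := htrans σ.symm A' A hAT hfix' hAiff' hTiff'
    rw [ha]
    simp only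
    refine Finset.sum_bij' (i := fun d _ => Finsupp.mapDomain (⇑σ) d)
      (j := fun d _ => Finsupp.mapDomain (⇑σ.symm) d)
      (hi := fun d hd => (hσ d hd).1)
      (hj := fun d hd => (hσ' d hd).1)
      (left_neg := fun d _ => hinv1 d σ)
      (right_neg := fun d _ => by
        have h := hinv1 d σ.symm
        rwa [Equiv.symm_symm] at h)
      ?_
    intro d hd
    obtain ⟨-, hco, hsd⟩ := hσ d hd
    rw [hco, hsd]
  -- the coefficient sequence
  set c : ℕ → ℂ := fun k =>
    if h : k ≤ T.card then a ((Finset.exists_subset_card_eq h).choose) else 0 with hcdef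
  have hac : ∀ A, A ⊆ T → a A = c A.card := by
    intro A hAT
    have h : A.card ≤ T.card := Finset.card_le_card hAT
    have hcv : c A.card = a ((Finset.exists_subset_card_eq h).choose) := by
      rw [hcdef]
      exact dif_pos h
    rw [hcv]
    obtain ⟨hsub, hcard⟩ := (Finset.exists_subset_card_eq h).choose_spec
    exact hkey A _ hAT hsub hcard.symm
  have hsum_w : ∀ w : Fin n → ℂ, (∀ i ∉ T, w i = z i) →
      MvPolynomial.eval w f
        = ∑ k ∈ Finset.range (T.card+1), ∑ A ∈ T.powersetCard k, a A * ∏ i ∈ A, w i := by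
    intro w hw
    rw [hsplit w hw, Finset.sum_powerset]
  have hz_eval : MvPolynomial.eval z f = ∑ k ∈ Finset.range (T.card+1), c k * esum T k z := by
    rw [hsum_w z (fun _ _ => rfl)]
    apply Finset.sum_congr rfl
    intro k hk
    rw [esum, Finset.mul_sum]
    apply Finset.sum_congr rfl
    intro A hA
    obtain ⟨hAT, hAcard⟩ := Finset.mem_powersetCard.1 hA
    rw [hac A hAT, hAcard]
  obtain ⟨y, hy, hdiag⟩ := exists_diag α β hα z T c (fun i _ => hz i)
  refine ⟨y, hy, ?_⟩
  rw [hz_eval, ← hdiag]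
  have hw' : ∀ i ∉ T, (fun i => if i ∈ T then y else z i) i = z i := by
    intro i hi; simp only [if_neg hi]
  rw [hsum_w _ hw']
  refine Finset.sum_congr rfl fun k hk => ?_
  have hterm : ∀ A ∈ T.powersetCard k,
      a A * ∏ i ∈ A, (if i ∈ T then y else z i) = c k * y ^ k := by
    intro A hA
    obtain ⟨hAT, hAcard⟩ := Finset.mem_powersetCard.1 hA
    have hprod : (∏ i ∈ A, (if i ∈ T then y else z i)) = y ^ k := by
      rw [Finset.prod_congr rfl (fun i hi => if_pos (hAT hi)), Finset.prod_const, hAcard]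
    rw [hprod, hac A hAT, hAcard]
  rw [Finset.sum_congr rfl hterm, Finset.sum_const, Finset.card_powersetCard, nsmul_eq_mul]
  ring

end GWSaux

/-- Young-subgroup version of the Grace–Walsh–Szegő coincidence theorem: let `ℍ` be a
closed half-plane, let the Young subgroup of `Sₙ` with consecutive blocks given by the
fibers of a monotone surjection `B : Fin n → Fin κ` be contained in the permutation group
`G`, and let `f` be a `G`-invariant multiaffine polynomial. Then for every `x ∈ ℍⁿ` there
are `y₁,…,y_κ ∈ ℍ` with `f(x) = f(y₁,…,y₁,…,y_κ,…,y_κ)` (each `y_j` repeated along the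
`j`-th block). -/
theorem stmt16 (n κ : ℕ) (α β : ℂ) (hα : α ≠ 0) (H : Set ℂ)
    (hH : H = {w : ℂ | 0 ≤ (α * w + β).re})
    (B : Fin n → Fin κ) (hmono : Monotone B) (hsurj : Function.Surjective B)
    (G : Subgroup (Equiv.Perm (Fin n)))
    (hYoung : ∀ σ : Equiv.Perm (Fin n), (∀ t, B (σ t) = B t) → σ ∈ G)
    (f : MvPolynomial (Fin n) ℂ)
    (hinv : ∀ σ ∈ G, MvPolynomial.rename (⇑σ) f = f)
    (hmaff : ∀ i, f.degreeOf i ≤ 1)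
    (x : Fin n → ℂ) (hx : ∀ i, x i ∈ H) :
    ∃ y : Fin κ → ℂ, (∀ j, y j ∈ H) ∧
      MvPolynomial.eval x f = MvPolynomial.eval (fun t => y (B t)) f := by
  classical
  subst hH
  have hz' : ∀ i, 0 ≤ (α * x i + β).re := fun i => hx i
  have main : ∀ k : ℕ, k ≤ κ → ∃ z : Fin n → ℂ, (∀ i, 0 ≤ (α * z i + β).re) ∧
      MvPolynomial.eval x f = MvPolynomial.eval z f ∧
      ∀ s t : Fin n, B s = B t → (B s : ℕ) < k → z s = z t := by
    intro k
    induction k with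
    | zero => exact fun _ => ⟨x, hz', rfl, fun s t _ h => absurd h (Nat.not_lt_zero _)⟩
    | succ k ih =>
      intro hk1
      obtain ⟨z, hzH, hzeval, hzconst⟩ := ih (Nat.le_of_succ_le hk1)
      set T : Finset (Fin n) := Finset.univ.filter (fun t => (B t : ℕ) = k) with hT
      have hsym : ∀ σ : Equiv.Perm (Fin n), (∀ i ∉ T, σ i = i) →
          MvPolynomial.rename (⇑σ) f = f := by
        intro σ hfixσ
        apply hinv σ
        apply hYoung σ
        intro t
        by_cases ht : t ∈ T
        · have hσt : σ t ∈ T := by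
            by_contra hσtn
            have h1 : σ (σ t) = σ t := hfixσ _ hσtn
            have h2 : σ t = t := σ.injective h1
            rw [h2] at hσtn
            exact hσtn ht
          have e1 : (B (σ t) : ℕ) = k := (Finset.mem_filter.1 hσt).2
          have e2 : (B t : ℕ) = k := (Finset.mem_filter.1 ht).2
          exact Fin.ext (e1.trans e2.symm)
        · rw [hfixσ t ht]
      obtain ⟨y₀, hy₀, heq⟩ := GWSaux.block α β hα f hmaff T hsym z hzH
      refine ⟨fun i => if i ∈ T then y₀ else z i, ?_, ?_, ?_⟩
      · intro i
        by_cases h : i ∈ T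
        · simpa [h] using hy₀
        · simpa [h] using hzH i
      · rw [hzeval]
        exact heq
      · intro s t hBst hlt
        by_cases hs : (B s : ℕ) = k
        · have hsT : s ∈ T := Finset.mem_filter.2 ⟨Finset.mem_univ _, hs⟩
          have htT : t ∈ T := Finset.mem_filter.2 ⟨Finset.mem_univ _, by rw [← hBst]; exact hs⟩
          simp only [if_pos hsT, if_pos htT]
        · have hlt' : (B s : ℕ) < k := by omega
          have hsT : s ∉ T := fun hmem => hs (Finset.mem_filter.1 hmem).2
          have htT : t ∉ T := fun hmem => hs (by
            have := (Finset.mem_filter.1 hmem).2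
            rw [hBst]
            exact this)
          simp only [if_neg hsT, if_neg htT]
          exact hzconst s t hBst hlt'
  obtain ⟨z, hzH, hzeval, hzconst⟩ := main κ le_rfl
  refine ⟨fun j => z (Function.surjInv hsurj j), fun j => hzH _, ?_⟩
  have hfun : (fun t => z (Function.surjInv hsurj (B t))) = z := by
    funext t
    have hB : B (Function.surjInv hsurj (B t)) = B t := Function.surjInv_eq hsurj (B t)
    exact hzconst (Function.surjInv hsurj (B t)) t hB (by rw [hB]; exact (B t).isLt)
  rw [hzeval]
  have hfin : MvPolynomial.eval (fun t => z (Function.surjInv hsurj (B t))) f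
      = MvPolynomial.eval z f := by rw [hfun]
  exact hfin.symm
end

section
/- Let G ⊂ Sₙ be a permutation group and let H = S̃¹_{j₁} × ⋯ × S̃^m_{j_m} ⊂ Sₙ be a Young subgroup containing G. Suppose that for every G-invariant multiaffine polynomial f ∈ ℂ[X₁,…,Xₙ] and every x ∈ (int ℍ₊)ⁿ there exist y₁,…,y_m ∈ int ℍ₊ such that f(x) = f(y₁,…,y₁, …, y_m,…,y_m) (with y_j repeated j_j times in the j-th block). Then every G-invariant multiaffine polynomial is H-invariant. -/
/-!
Let `H` be the Young subgroup and `f` a `G`-invariant multiaffine polynomial. The defect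
`g = ∑_{π ∈ H} π·f - |H| f` is again `G`-invariant (as `G ≤ H`) and multiaffine, and it vanishes
at every block-constant point because `H` fixes such points. By the coincidence hypothesis every
value of `g` on the open upper half-plane is a value at a block-constant point, so `g` vanishes
there and hence `g = 0`. Thus `|H| f` is the `H`-invariant orbit sum, and `f` is `H`-invariant.
-/

open MvPolynomial Equiv

def youngSubgroup {α β : Type*} (B : α → β) : Subgroup (Perm α) where
  carrier := {σ | ∀ t, B (σ t) = B t}
  one_mem' _ := rfl
  mul_mem' {σ τ} hσ hτ t := (hσ (τ t)).trans (hτ t)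
  inv_mem' {σ} hσ t := by simpa using (hσ (σ⁻¹ t)).symm

theorem mem_youngSubgroup {α β : Type*} {B : α → β} {σ : Perm α} :
    σ ∈ youngSubgroup B ↔ ∀ t, B (σ t) = B t :=
  Iff.rfl

namespace MvPolynomial

variable {σ τ R : Type*} [CommRing R]

theorem mem_restrictDegree_iff_degreeOf_le {p : MvPolynomial σ R} {n : ℕ} :
    p ∈ restrictDegree σ R n ↔ ∀ i, degreeOf i p ≤ n := by
  simp only [mem_restrictDegree, degreeOf_le_iff]
  exact ⟨fun h i s hs => h s hs i, fun h s hs i => h i s hs⟩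

theorem rename_mem_restrictDegree (e : σ ≃ τ) {p : MvPolynomial σ R} {n : ℕ}
    (hp : p ∈ restrictDegree σ R n) : rename e p ∈ restrictDegree τ R n := by
  rw [mem_restrictDegree_iff_degreeOf_le] at hp ⊢
  intro i
  simpa using (degreeOf_rename_of_injective e.injective (e.symm i)).trans_le (hp (e.symm i))

/-- Two points per coordinate already detect a multiaffine polynomial. -/
theorem eq_zero_of_degreeOf_le_one_of_eval_im_pos [Finite σ] {p : MvPolynomial σ ℂ}
    (hp : ∀ i, degreeOf i p ≤ 1)
    (h : ∀ x : σ → ℂ, (∀ i, 0 < (x i).im) → eval x p = 0) : p = 0 := by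
  refine eq_zero_of_eval_zero_at_prod_finset p (fun _ => {Complex.I, 2 * Complex.I})
    (fun i => ?_) (fun x hx => h x fun i => ?_)
  · rw [Finset.card_pair (by simp [Complex.ext_iff])]
    exact (hp i).trans_lt one_lt_two
  · rcases Finset.mem_insert.1 (hx i) with hxi | hxi <;> simp_all

section OrbitSum

variable (H : Subgroup (Perm σ)) [Fintype H]

noncomputable def orbitSum (f : MvPolynomial σ R) : MvPolynomial σ R :=
  ∑ π : H, rename (π : Perm σ) f

variable {H}

theorem rename_orbitSum {ρ : Perm σ} (hρ : ρ ∈ H) (f : MvPolynomial σ R) :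
    rename ρ (orbitSum H f) = orbitSum H f := by
  simp only [orbitSum, map_sum, rename_rename]
  exact Fintype.sum_equiv (Equiv.mulLeft ⟨ρ, hρ⟩) _ _ fun π => by simp

theorem eval_orbitSum {x : σ → R} (hx : ∀ π ∈ H, x ∘ π = x) (f : MvPolynomial σ R) :
    eval x (orbitSum H f) = Fintype.card H • eval x f := by
  simp [orbitSum, eval_rename, hx]

theorem rename_orbitSum_sub_nsmul {ρ : Perm σ} (hρ : ρ ∈ H) {f : MvPolynomial σ R}
    (hf : rename ρ f = f) :
    rename ρ (orbitSum H f - Fintype.card H • f) = orbitSum H f - Fintype.card H • f := by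
  rw [map_sub, map_nsmul, rename_orbitSum hρ, hf]

theorem rename_eq_self_of_orbitSum_eq [IsDomain R] [CharZero R] {f : MvPolynomial σ R}
    (hf : orbitSum H f = Fintype.card H • f) {ρ : Perm σ} (hρ : ρ ∈ H) : rename ρ f = f := by
  refine nsmul_right_injective (Fintype.card_ne_zero (α := H)) ?_
  simp only [← map_nsmul, ← hf, rename_orbitSum hρ]

end OrbitSum

end MvPolynomial

theorem stmt17_general (n m : ℕ) (B : Fin n → Fin m)
    (G : Subgroup (Equiv.Perm (Fin n)))
    (hGH : ∀ σ ∈ G, ∀ t, B (σ t) = B t)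
    (hcoin : ∀ f : MvPolynomial (Fin n) ℂ,
      (∀ σ ∈ G, MvPolynomial.rename (⇑σ) f = f) → (∀ i, f.degreeOf i ≤ 1) →
      ∀ x : Fin n → ℂ, (∀ i, 0 < (x i).im) →
        ∃ y : Fin m → ℂ, (∀ j, 0 < (y j).im) ∧
          MvPolynomial.eval x f = MvPolynomial.eval (fun t => y (B t)) f) :
    ∀ f : MvPolynomial (Fin n) ℂ,
      (∀ σ ∈ G, MvPolynomial.rename (⇑σ) f = f) → (∀ i, f.degreeOf i ≤ 1) →
      ∀ σ : Equiv.Perm (Fin n), (∀ t, B (σ t) = B t) → MvPolynomial.rename (⇑σ) f = f := by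
  classical
  intro f hGf hdeg τ hτ
  set H := youngSubgroup B
  set g := orbitSum H f - Fintype.card H • f
  have hf_mem : f ∈ restrictDegree (Fin n) ℂ 1 := mem_restrictDegree_iff_degreeOf_le.2 hdeg
  have hg_deg : ∀ i, g.degreeOf i ≤ 1 := mem_restrictDegree_iff_degreeOf_le.1 <|
    sub_mem (Submodule.sum_mem _ fun π _ => rename_mem_restrictDegree _ hf_mem)
      (Submodule.smul_of_tower_mem _ _ hf_mem)
  have hg_inv : ∀ ρ ∈ G, rename ρ g = g := fun ρ hρ =>
    rename_orbitSum_sub_nsmul (H := H) (hGH ρ hρ) (hGf ρ hρ)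
  have hg_block (y : Fin m → ℂ) : eval (fun t => y (B t)) g = 0 := by
    have hfix : ∀ π ∈ H, (fun t => y (B t)) ∘ π = fun t => y (B t) := fun π hπ =>
      funext fun t => congrArg y (mem_youngSubgroup.1 hπ t)
    rw [map_sub, map_nsmul, eval_orbitSum hfix, sub_self]
  have hg_zero : g = 0 := eq_zero_of_degreeOf_le_one_of_eval_im_pos hg_deg fun x hx => by
    obtain ⟨y, -, hxy⟩ := hcoin g hg_inv hg_deg x hx
    rw [hxy, hg_block]
  exact rename_eq_self_of_orbitSum_eq (sub_eq_zero.1 hg_zero) (mem_youngSubgroup.2 hτ)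

/-- Converse to the Young-subgroup coincidence property: let `H` be the Young subgroup of
`Sₙ` with consecutive blocks given by the fibers of a monotone surjection `B : Fin n → Fin m`,
and let `G ⊆ H` be a permutation group. If every `G`-invariant multiaffine polynomial `f`
satisfies the coincidence property on the open upper half-plane (for every
`x ∈ (int ℍ₊)ⁿ` there are `y₁,…,y_m ∈ int ℍ₊` with `f(x) = f(y₁,…,y₁,…,y_m,…,y_m)`,
each `y_j` repeated along the `j`-th block), then every `G`-invariant multiaffine
polynomial is `H`-invariant. -/
theorem stmt17 (n m : ℕ) (B : Fin n → Fin m) (hmono : Monotone B)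
    (hsurj : Function.Surjective B)
    (G : Subgroup (Equiv.Perm (Fin n)))
    (hGH : ∀ σ ∈ G, ∀ t, B (σ t) = B t)
    (hcoin : ∀ f : MvPolynomial (Fin n) ℂ,
      (∀ σ ∈ G, MvPolynomial.rename (⇑σ) f = f) → (∀ i, f.degreeOf i ≤ 1) →
      ∀ x : Fin n → ℂ, (∀ i, 0 < (x i).im) →
        ∃ y : Fin m → ℂ, (∀ j, 0 < (y j).im) ∧
          MvPolynomial.eval x f = MvPolynomial.eval (fun t => y (B t)) f) :
    ∀ f : MvPolynomial (Fin n) ℂ,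
      (∀ σ ∈ G, MvPolynomial.rename (⇑σ) f = f) → (∀ i, f.degreeOf i ≤ 1) →
      ∀ σ : Equiv.Perm (Fin n), (∀ t, B (σ t) = B t) → MvPolynomial.rename (⇑σ) f = f :=
  stmt17_general n m B G hGH hcoin
end
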